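/- arXiv:1408.5607 — 11 statements merged into one kernel-verified Lean document; each statement's English description precedes it below -/
import Mathlib

section
/- Let G be a group whose cardinality κ = |G| is a singular cardinal. If a subset A of G is left κ-thick, then A is right κ-large. -/
open scoped Pointwise
open Cardinal

universe u

variable {G : Type u}

/-- `A` is left `κ`-large: `G = F * A` for some `F` with `|F| < κ`. -/
def LeftLarge [Group G] (κ : Cardinal.{u}) (A : Set G) : Prop :=
  ∃ F : Set G, #F < κ ∧ F * A = Set.univ

/-- `A` is right `κ`-large: `G = A * F` for some `F` with `|F| < κ`. -/
def RightLarge [Group G] (κ : Cardinal.{u}) (A : Set G) : Prop :=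
  ∃ F : Set G, #F < κ ∧ A * F = Set.univ

/-- `A` is `κ`-large: `G = F * A * F` for some `F` with `|F| < κ`. -/
def KLarge [Group G] (κ : Cardinal.{u}) (A : Set G) : Prop :=
  ∃ F : Set G, #F < κ ∧ F * A * F = Set.univ

/-- `A` is left `κ`-thick: for every `F` with `|F| < κ` there is `a ∈ A` with `F * a ⊆ A`. -/
def LeftThick [Group G] (κ : Cardinal.{u}) (A : Set G) : Prop :=
  ∀ F : Set G, #F < κ → ∃ a ∈ A, F * {a} ⊆ A

/-- `A` is right `κ`-thick: for every `F` with `|F| < κ` there is `a ∈ A` with `a * F ⊆ A`. -/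
def RightThick [Group G] (κ : Cardinal.{u}) (A : Set G) : Prop :=
  ∀ F : Set G, #F < κ → ∃ a ∈ A, {a} * F ⊆ A

/-- `A` is `κ`-thick: for every `F` with `|F| < κ` there is `a ∈ A` with `F * a * F ⊆ A`. -/
def KThick [Group G] (κ : Cardinal.{u}) (A : Set G) : Prop :=
  ∀ F : Set G, #F < κ → ∃ a ∈ A, F * {a} * F ⊆ A

/-- `G` is `κ`-normal: every subset of size `< κ` lies in a normal subgroup of size `< κ`. -/
def KNormal (G : Type u) [Group G] (κ : Cardinal.{u}) : Prop :=
  ∀ F : Set G, #F < κ → ∃ H : Subgroup G, H.Normal ∧ #(H : Set G) < κ ∧ F ⊆ (H : Set G)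

/-- `κ` is a singular cardinal: infinite, with cofinality strictly less than `κ`. -/
def Singular (κ : Cardinal.{u}) : Prop := ℵ₀ ≤ κ ∧ κ.ord.cof < κ

/-!
Well-order `G` in type `ord κ`. The initial segments below the points of a cofinal subset cover
`G`; there are only `cof κ < κ` of them and each has size `< κ`. Left thickness yields for each
such segment `Gᵢ` some `aᵢ` with `Gᵢ * aᵢ ⊆ A`, hence `G = A * {aᵢ⁻¹}`.
-/

theorem Cardinal.exists_iUnion_eq_univ_mk_lt_of_aleph0_le {α : Type u} (hα : ℵ₀ ≤ #α) :
    ∃ (ι : Type u) (s : ι → Set α),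
      #ι = (#α).ord.cof ∧ (∀ i, #(s i) < #α) ∧ ⋃ i, s i = Set.univ := by
  obtain ⟨_, _, hord⟩ := exists_ord_eq_type_lt α
  obtain ⟨S, hS, hScard⟩ := Order.exists_cof_eq α
  refine ⟨S, fun i => Set.Iic (i : α), ?_, fun i => mk_Iic_lt _ hord hα, ?_⟩
  · rw [hScard, hord, Ordinal.cof_type]
  · rw [Set.iUnion_subtype]
    exact isCofinal_iff_iUnion_Iic_eq_univ.1 hS

section Group

variable [Group G]

theorem Set.mul_range_inv_eq_univ_of_iUnion_eq_univ {ι : Type*} {A : Set G} {s : ι → Set G}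
    {a : ι → G} (hcover : ⋃ i, s i = Set.univ) (hsA : ∀ i, s i * {a i} ⊆ A) :
    A * Set.range (fun i => (a i)⁻¹) = Set.univ := by
  refine Set.eq_univ_of_forall fun g => ?_
  obtain ⟨i, hi⟩ := Set.mem_iUnion.1 (hcover.symm ▸ Set.mem_univ g)
  have hgA : g * a i ∈ A := hsA i (Set.mul_mem_mul hi rfl)
  exact ⟨g * a i, hgA, (a i)⁻¹, ⟨i, rfl⟩, mul_inv_cancel_right g (a i)⟩

theorem LeftThick.rightLarge_of_iUnion_eq_univ {κ : Cardinal.{u}} {A : Set G}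
    (hA : LeftThick κ A) {ι : Type u} (hι : #ι < κ) {s : ι → Set G} (hs : ∀ i, #(s i) < κ)
    (hcover : ⋃ i, s i = Set.univ) : RightLarge κ A := by
  choose a _ hsA using fun i => hA (s i) (hs i)
  exact ⟨_, mk_range_le.trans_lt hι, Set.mul_range_inv_eq_univ_of_iUnion_eq_univ hcover hsA⟩

end Group

/-- In a group of singular cardinality `κ`,
every left `κ`-thick set is right `κ`-large. -/
theorem leftThick_rightLarge_of_singular {G : Type u} [Group G]
    (κ : Cardinal.{u}) (hκ : #G = κ) (hsing : Singular κ)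
    (A : Set G) (hA : LeftThick κ A) : RightLarge κ A := by
  subst hκ
  obtain ⟨hinf, hcof⟩ := hsing
  obtain ⟨ι, s, hι, hs, hcover⟩ := exists_iUnion_eq_univ_mk_lt_of_aleph0_le hinf
  exact hA.rightLarge_of_iUnion_eq_univ (hι ▸ hcof) hs hcover
end

section
/- Let G be a group whose cardinality κ = |G| is a singular cardinal. Then G cannot be partitioned into two κ-thick subsets; that is, there is no pair of disjoint subsets A, B with A ∪ B = G such that both A and B are κ-thick. -/
/-!
Write `G` as the union of `cf κ` sets `Fᵢ` of size `< κ` (initial segments along a cofinal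
sequence in `κ`). Thickness of `A` provides `aᵢ ∈ A` with `Fᵢ aᵢ ⊆ A` for each `i`. There are only
`cf κ < κ` such `aᵢ`, so thickness of `B` provides `b` with `b aᵢ ∈ B` for all `i`. But `b` lies
in some `Fᵢ`, hence `b aᵢ ∈ A ∩ B`.
-/

open scoped Pointwise
open Cardinal

universe u

variable {G : Type u}

open Set

theorem Cardinal.exists_iUnion_eq_univ_of_aleph0_le (α : Type u) (hα : ℵ₀ ≤ #α) :
    ∃ (ι : Type u) (F : ι → Set α),
      #ι = (#α).ord.cof ∧ (∀ i, #(F i) < #α) ∧ ⋃ i, F i = Set.univ := by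
  set T := (#α).ord.ToType
  have hT : #T = #α := mk_ord_toType _
  obtain ⟨e⟩ : Nonempty (α ≃ T) := Cardinal.eq.mp hT.symm
  obtain ⟨S, hS, hScard⟩ := Order.exists_cof_eq T
  refine ⟨S, fun j => e ⁻¹' Iic j.1, by rw [hScard, Ordinal.cof_toType], fun j => ?_, ?_⟩
  · rw [mk_preimage_equiv]
    have := mk_Iic_lt j.1 (by simp [T]) (hT ▸ hα)
    rwa [hT] at this
  · refine iUnion_eq_univ_iff.mpr fun x => ?_
    obtain ⟨j, hj, hxj⟩ := hS (e x)
    exact ⟨⟨j, hj⟩, hxj⟩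

section Thick

variable [Group G] {κ : Cardinal.{u}} {A B : Set G}

theorem KThick.leftThick (hκ : ℵ₀ ≤ κ) (hA : KThick κ A) : LeftThick κ A := by
  intro F hF
  obtain ⟨a, ha, hFa⟩ := hA (insert 1 F) (mk_insert_le.trans_lt (add_one_lt_of_lt hκ hF))
  refine ⟨a, ha, ?_⟩
  rintro _ ⟨f, hf, _, rfl, rfl⟩
  simpa using hFa (mul_mem_mul (mul_mem_mul (mem_insert_of_mem 1 hf) rfl) (mem_insert 1 F))

theorem KThick.rightThick (hκ : ℵ₀ ≤ κ) (hA : KThick κ A) : RightThick κ A := by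
  intro F hF
  obtain ⟨a, ha, hFa⟩ := hA (insert 1 F) (mk_insert_le.trans_lt (add_one_lt_of_lt hκ hF))
  refine ⟨a, ha, ?_⟩
  rintro _ ⟨_, rfl, f, hf, rfl⟩
  simpa using hFa (mul_mem_mul (mul_mem_mul (mem_insert 1 F) rfl) (mem_insert_of_mem 1 hf))

theorem LeftThick.not_disjoint_of_rightThick {ι : Type u} (F : ι → Set G) (hι : #ι < κ)
    (hF : ∀ i, #(F i) < κ) (hcover : ⋃ i, F i = Set.univ) (hA : LeftThick κ A)
    (hB : RightThick κ B) : ¬Disjoint A B := by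
  choose a _ hFa using fun i => hA (F i) (hF i)
  obtain ⟨b, -, hbE⟩ := hB (range a) (mk_range_le.trans_lt hι)
  obtain ⟨i, hbi⟩ := iUnion_eq_univ_iff.mp hcover b
  refine not_disjoint_iff.mpr ⟨b * a i, hFa i (mul_mem_mul hbi rfl), hbE ?_⟩
  exact mul_mem_mul rfl (mem_range_self i)

end Thick

/-- A group of singular cardinality `κ` cannot be partitioned
into two `κ`-thick subsets. -/
theorem no_partition_into_two_thick_of_singular {G : Type u} [Group G]
    (κ : Cardinal.{u}) (hκ : #G = κ) (hsing : Singular κ) :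
    ¬ ∃ A B : Set G, Disjoint A B ∧ A ∪ B = Set.univ ∧ KThick κ A ∧ KThick κ B := by
  rintro ⟨A, B, hAB, -, hA, hB⟩
  obtain ⟨hinf, hcof⟩ := hsing
  subst hκ
  obtain ⟨ι, F, hι, hF, hcover⟩ := exists_iUnion_eq_univ_of_aleph0_le G hinf
  exact (hA.leftThick hinf).not_disjoint_of_rightThick F (hι ▸ hcof) hF hcover
    (hB.rightThick hinf) hAB
end

section
/- Let G be a κ-normal group whose cardinality κ = |G| is a singular cardinal. Then for every finite partition G = A₁ ∪ … ∪ Aₙ of G, at least one cell Aᵢ is κ-large. -/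
open scoped Pointwise
open Cardinal

universe u

variable {G : Type u}

/-!
Call `B ⊆ G` normal-thick if it contains a coset of every normal subgroup of cardinality `< κ`.
If no `H Aᵢ` (with `H` small and normal) is normal-thick, then removing the cells from `G` one at
a time keeps the remainder normal-thick, which is absurd once nothing is left. So some `H Aᵢ` is
normal-thick. Since `κ` is singular and `G` is `κ`-normal, `G` is a union of fewer than `κ` small
normal subgroups, and this makes every normal-thick set left `κ`-large; hence so is `H Aᵢ`,
and then `Aᵢ`.
-/

theorem Cardinal.exists_iUnion_eq_univ_of_cof_lt {α : Type u} (hinf : ℵ₀ ≤ #α)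
    (hcof : (#α).ord.cof < #α) :
    ∃ (ι : Type u) (s : ι → Set α), #ι < #α ∧ (∀ i, #(s i) < #α) ∧ ⋃ i, s i = Set.univ := by
  obtain ⟨e⟩ := Cardinal.eq.mp (show #α = #(#α).ord.ToType by simp)
  obtain ⟨S, hS, hScard⟩ := Order.exists_cof_eq (α := (#α).ord.ToType)
  rw [Ordinal.cof_toType] at hScard
  refine ⟨S, fun b => e ⁻¹' Set.Iic b.1, hScard ▸ hcof, fun b => ?_, ?_⟩
  · have hIic : Set.Iic b.1 = insert b.1 (Set.Iio b.1) := by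
      ext x; simp [le_iff_lt_or_eq, or_comm]
    calc #(e ⁻¹' Set.Iic b.1) ≤ #(Set.Iic b.1) := mk_preimage_of_injective e _ e.injective
      _ ≤ #(Set.Iio b.1) + 1 := hIic ▸ mk_insert_le
      _ < #α := add_lt_of_lt hinf ((mk_Iio_lt b.1 (by simp)).trans_eq (by simp))
        (one_lt_aleph0.trans_le hinf)
  · refine Set.eq_univ_of_forall fun x => Set.mem_iUnion.mpr ?_
    obtain ⟨b, hbS, hb⟩ := hS (e x)
    exact ⟨⟨b, hbS⟩, hb⟩

section Group

variable [Group G] {κ : Cardinal.{u}}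

def NormalThick (κ : Cardinal.{u}) (B : Set G) : Prop :=
  ∀ H : Subgroup G, H.Normal → #(H : Set G) < κ → ∃ g : G, g • (H : Set G) ⊆ B

theorem normalThick_univ : NormalThick κ (Set.univ : Set G) :=
  fun _ _ _ => ⟨1, Set.subset_univ _⟩

theorem NormalThick.nonempty (h1 : 1 < κ) {B : Set G} (hB : NormalThick κ B) : B.Nonempty := by
  obtain ⟨g, hg⟩ := hB ⊥ inferInstance (by simpa using h1)
  exact ⟨g, hg ⟨1, rfl, mul_one g⟩⟩

theorem LeftLarge.of_mul_left (hinf : ℵ₀ ≤ κ) {S A : Set G} (hS : #S < κ)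
    (h : LeftLarge κ (S * A)) : LeftLarge κ A := by
  obtain ⟨F, hF, hFSA⟩ := h
  refine ⟨F * S, ?_, by rwa [mul_assoc]⟩
  calc #(F * S : Set G) ≤ #F * #S := by rw [← Set.image2_mul]; exact mk_image2_le
    _ < κ := mul_lt_of_lt hinf hF hS

theorem LeftLarge.kLarge (hinf : ℵ₀ ≤ κ) {A : Set G} (h : LeftLarge κ A) : KLarge κ A := by
  obtain ⟨F, hF, hFA⟩ := h
  refine ⟨F ∪ {1}, ?_, Set.eq_univ_of_univ_subset ?_⟩
  · calc #(F ∪ {1} : Set G) ≤ #F + 1 := by simpa using mk_union_le F {1}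
      _ < κ := add_lt_of_lt hinf hF (one_lt_aleph0.trans_le hinf)
  · calc Set.univ = F * A * {1} := by rw [hFA, Set.singleton_one, mul_one]
      _ ⊆ (F ∪ {1}) * A * (F ∪ {1}) :=
        Set.mul_subset_mul (Set.mul_subset_mul_right Set.subset_union_left)
          Set.subset_union_right

/-- `G` is a union of fewer than `κ` small normal subgroups `Hᵢ`, and `gᵢ Hᵢ ⊆ B` puts
`Hᵢ` inside `gᵢ⁻¹ B`. -/
theorem NormalThick.leftLarge (hκ : #G = κ) (hsing : Singular κ) (hnorm : KNormal G κ)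
    {B : Set G} (hB : NormalThick κ B) : LeftLarge κ B := by
  subst hκ
  obtain ⟨ι, s, hι, hs, hcover⟩ := exists_iUnion_eq_univ_of_cof_lt hsing.1 hsing.2
  choose H hH using fun i => hnorm (s i) (hs i)
  choose g hg using fun i => hB (H i) (hH i).1 (hH i).2.1
  refine ⟨Set.range fun i => (g i)⁻¹, mk_range_le.trans_lt hι, Set.eq_univ_of_forall fun x => ?_⟩
  obtain ⟨i, hx⟩ := Set.mem_iUnion.mp (hcover.symm ▸ Set.mem_univ x : x ∈ ⋃ i, s i)
  have hgx : g i * x ∈ B := hg i ⟨x, (hH i).2.2 hx, rfl⟩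
  exact ⟨(g i)⁻¹, ⟨i, rfl⟩, g i * x, hgx, inv_mul_cancel_left (g i) x⟩

/-- Given a small normal `H`, pick a small normal `K` with no coset `g K` inside `H B`, and a
coset `g L ⊆ C` of a small normal `L ⊇ H ∪ K`. Some `g l H` (with `l ∈ L`) misses `B`: otherwise
every `g k` (`k ∈ K`) lies in `B H = H B`. -/
theorem NormalThick.diff (hinf : ℵ₀ ≤ κ) (hnorm : KNormal G κ) {B C : Set G}
    (hC : NormalThick κ C)
    (hB : ∀ H : Subgroup G, H.Normal → #(H : Set G) < κ → ¬ NormalThick κ ((H : Set G) * B)) :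
    NormalThick κ (C \ B) := by
  intro H hHn hHκ
  obtain ⟨K, hKn, hKκ, hK⟩ : ∃ K : Subgroup G, K.Normal ∧ #(K : Set G) < κ ∧
      ∀ g : G, ¬ g • (K : Set G) ⊆ (H : Set G) * B := by
    simpa [NormalThick] using hB H hHn hHκ
  obtain ⟨L, hLn, hLκ, hHKL⟩ := hnorm ((H : Set G) ∪ K)
    ((mk_union_le _ _).trans_lt (add_lt_of_lt hinf hHκ hKκ))
  obtain ⟨g, hg⟩ := hC L hLn hLκ
  obtain ⟨l, hl, hlB⟩ : ∃ l ∈ L, ∀ b ∈ B, b ∉ (g * l) • (H : Set G) := by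
    by_contra! hmeet
    refine hK g ?_
    rintro _ ⟨k, hk, rfl⟩
    obtain ⟨b, hb, h, hh, hgkh⟩ := hmeet k (hHKL (Or.inr hk))
    have hgk : g * k = b * h⁻¹ * b⁻¹ * b := by
      rw [← hgkh]; simp only [smul_eq_mul]; group
    change g * k ∈ _
    rw [hgk]
    exact Set.mul_mem_mul (hHn.conj_mem _ (H.inv_mem hh) b) hb
  refine ⟨g * l, ?_⟩
  rintro _ ⟨h, hh, rfl⟩
  refine ⟨hg ⟨l * h, L.mul_mem hl (hHKL (Or.inl hh)), by simp [mul_assoc]⟩, fun hB' => ?_⟩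
  exact hlB _ hB' ⟨h, hh, rfl⟩

theorem NormalThick.diff_biUnion {ι : Type*} (hinf : ℵ₀ ≤ κ) (hnorm : KNormal G κ)
    {B : ι → Set G} {C : Set G} (hC : NormalThick κ C)
    (hB : ∀ i, ∀ H : Subgroup G, H.Normal → #(H : Set G) < κ →
      ¬ NormalThick κ ((H : Set G) * B i))
    (s : Finset ι) : NormalThick κ (C \ ⋃ i ∈ s, B i) := by
  classical
  induction s using Finset.induction_on with
  | empty => simpa using hC
  | insert a s _ ih =>
    rw [Finset.set_biUnion_insert, Set.union_comm, ← Set.sdiff_sdiff]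
    exact ih.diff hinf hnorm (hB a)

end Group

theorem exists_large_cell_of_finite_partition_general {G : Type u} [Group G]
    (κ : Cardinal.{u}) (hκ : #G = κ) (hsing : Singular κ) (hnorm : KNormal G κ)
    (n : ℕ) (A : Fin n → Set G)
    (hcover : (⋃ i, A i) = Set.univ) :
    ∃ i, KLarge κ (A i) := by
  have hinf := hsing.1
  by_contra! hsmall
  have hempty : NormalThick κ (∅ : Set G) := by
    have hthick := normalThick_univ.diff_biUnion hinf hnorm (B := A)
      (fun i H _ hHκ hHA => hsmall i ((hHA.leftLarge hκ hsing hnorm).of_mul_left hinf hHκ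
        |>.kLarge hinf)) Finset.univ
    simpa [hcover] using hthick
  exact Set.not_nonempty_empty (hempty.nonempty (one_lt_aleph0.trans_le hinf))

/-- If `G` is a `κ`-normal group of singular cardinality `κ`, then
in any finite partition of `G` at least one cell is `κ`-large. -/
theorem exists_large_cell_of_finite_partition {G : Type u} [Group G]
    (κ : Cardinal.{u}) (hκ : #G = κ) (hsing : Singular κ) (hnorm : KNormal G κ)
    (n : ℕ) (A : Fin n → Set G) (hdisj : Pairwise (Function.onFun Disjoint A))
    (hcover : (⋃ i, A i) = Set.univ) :
    ∃ i, KLarge κ (A i) :=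
  exists_large_cell_of_finite_partition_general κ hκ hsing hnorm n A hcover
end

section
/- Let F_A be a free group on a nonempty set A and let κ = |F_A|. Then F_A can be partitioned into two subsets B₁ and B₂ (disjoint, with union F_A) such that neither B₁ nor B₂ is left κ-large. -/
open scoped Pointwise
open Cardinal

universe u

variable {G : Type u}

/-! Split `F_A` by the sign of the last letter of reduced words. If `|F| < |F_A|`, some generator
`a` occurs fewer than `n` times in every reduced word of `F⁻¹`: for finite `F` take `n` beyond all
lengths; for infinite `F` the set `A` is uncountable and larger than `F`, so some generator occurs
in no word of `F` at all. Then cancellation cannot absorb all of `a^{±n}`, so the reduced word of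
`f⁻¹ a^{±n}` ends in `a^{±1}` for every `f ∈ F`, and `a^{±n}` lies outside `F · B` for the part
`B` avoiding that sign. -/

namespace FreeGroup

variable {α : Type u} [DecidableEq α]

theorem toWord_mul_mk_singleton (g : FreeGroup α) (x : α × Bool) :
    (g * mk [x]).toWord = g.toWord ++ [x] ∨
      g.toWord = (g * mk [x]).toWord ++ [(x.1, !x.2)] := by
  by_cases hcancel : ∃ u, g.toWord = u ++ [(x.1, !x.2)]
  · obtain ⟨u, hu⟩ := hcancel
    have hg : g = mk u * (mk [x])⁻¹ := by
      rw [← mk_toWord (x := g), hu, ← mul_mk, inv_mk]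
      simp [invRev]
    have hu_red : IsReduced u := isReduced_toWord.infix (hu ▸ List.prefix_append u _).isInfix
    right
    rw [hg, inv_mul_cancel_right, toWord_mk, hu_red.reduce_eq, ← hu, hg]
  · have hred : IsReduced (g.toWord ++ [x]) := by
      refine List.IsChain.append isReduced_toWord IsReduced.singleton fun y hy z hz hyz => ?_
      obtain rfl : x = z := by simpa using hz
      by_contra hne
      exact hcancel ⟨g.toWord.dropLast, by
        rw [← List.dropLast_append_getLast? y hy]
        simp [Prod.ext_iff, hyz, Bool.eq_not.2 hne]⟩
    left
    rw [toWord_mul, toWord_mk, reduce_singleton, hred.reduce_eq]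

theorem getLast?_toWord_mul_pow_or_count_le (g : FreeGroup α) (x : α × Bool) (n : ℕ) :
    (g * mk [x] ^ n).toWord.getLast? = some x ∨
      ((g * mk [x] ^ n).toWord.map Prod.fst).count x.1 + n ≤ (g.toWord.map Prod.fst).count x.1 := by
  induction n with
  | zero => simp
  | succ n ih =>
    rw [pow_succ, ← mul_assoc]
    rcases toWord_mul_mk_singleton (g * mk [x] ^ n) x with hgrow | hcancel
    · left
      rw [hgrow, List.getLast?_concat]
    · rw [hcancel] at ih
      rcases ih with hlast | hcount
      · simp [Prod.ext_iff] at hlast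
      · right
        simp only [List.map_append, List.count_append, List.map_cons, List.map_nil,
          List.count_singleton_self] at hcount
        omega

theorem getLast?_toWord_mul_pow {g : FreeGroup α} {x : α × Bool} {n : ℕ}
    (hn : (g.toWord.map Prod.fst).count x.1 < n) :
    (g * mk [x] ^ n).toWord.getLast? = some x :=
  (getLast?_toWord_mul_pow_or_count_le g x n).resolve_right (by omega)

theorem exists_forall_notMem_letters_of_aleph0_le [Nonempty α] {F : Set (FreeGroup α)}
    (hF₀ : ℵ₀ ≤ #F) (hF : #F < #(FreeGroup α)) : ∃ a, ∀ f ∈ F, a ∉ f.toWord.map Prod.fst := by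
  rw [mk_freeGroup] at hF
  have hα : ℵ₀ < #α := by
    by_contra! hα
    rw [max_eq_right hα] at hF
    exact hF.not_ge hF₀
  rw [max_eq_left hα.le] at hF
  set letters : Set α := ⋃ f ∈ F, ((f.toWord.map Prod.fst).toFinset : Set α)
  have hletters : #letters < #α := calc
    #letters ≤ #F * ⨆ f : F, #((f.1.toWord.map Prod.fst).toFinset : Set α) := mk_biUnion_le _ _
    _ < #α := mul_lt_of_lt hα.le hF <|
      (ciSup_le' fun _ => (finset_card_lt_aleph0 _).le).trans_lt hα
  obtain ⟨a, ha⟩ : ∃ a, a ∉ letters := by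
    by_contra! hall
    rw [Set.eq_univ_of_forall hall, mk_univ] at hletters
    exact hletters.false
  exact ⟨a, fun f hf haf => ha (Set.mem_biUnion hf (by simpa using haf))⟩

theorem exists_forall_count_letters_lt [Nonempty α] {F : Set (FreeGroup α)}
    (hF : #F < #(FreeGroup α)) : ∃ a n, ∀ f ∈ F, (f.toWord.map Prod.fst).count a < n := by
  by_cases hfin : F.Finite
  · obtain ⟨N, hN⟩ := (hfin.image fun f => f.toWord.length).bddAbove
    refine ⟨Classical.arbitrary α, N + 1, fun f hf => ?_⟩
    calc (f.toWord.map Prod.fst).count _ ≤ f.toWord.length :=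
          List.count_le_length.trans_eq (List.length_map _)
      _ < N + 1 := Nat.lt_succ_of_le (hN ⟨f, hf, rfl⟩)
  · obtain ⟨a, ha⟩ := exists_forall_notMem_letters_of_aleph0_le
      (aleph0_le_mk_iff.2 (Set.infinite_coe_iff.2 hfin)) hF
    exact ⟨a, 1, fun f hf => by simp [List.count_eq_zero.2 (ha f hf)]⟩

end FreeGroup

theorem FreeGroup.not_leftLarge_of_forall_getLast?_ne {α : Type u} [DecidableEq α] [Nonempty α]
    {B : Set (FreeGroup α)} (b : Bool) (hB : ∀ g ∈ B, ∀ a, g.toWord.getLast? ≠ some (a, b)) :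
    ¬ LeftLarge #(FreeGroup α) B := by
  rintro ⟨F, hF, hFB⟩
  obtain ⟨a, n, hcount⟩ := exists_forall_count_letters_lt (F := F⁻¹) (by rwa [Cardinal.mk_inv])
  obtain ⟨f, hf, g, hg, hfg⟩ := hFB.symm ▸ Set.mem_univ (mk [(a, b)] ^ n)
  have hg_eq : g = f⁻¹ * mk [(a, b)] ^ n := by rw [← hfg, inv_mul_cancel_left]
  exact hB g hg a (hg_eq ▸ getLast?_toWord_mul_pow (hcount f⁻¹ (Set.inv_mem_inv.2 hf)))

/-- Every free group `F_A` (on a nonempty set `A`) can be partitioned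
into two subsets, neither of which is left `κ`-large, where `κ = |F_A|`. -/
theorem freeGroup_partition_two_not_leftLarge (A : Type u) [Nonempty A] :
    ∃ B₁ B₂ : Set (FreeGroup A), Disjoint B₁ B₂ ∧ B₁ ∪ B₂ = Set.univ ∧
      ¬ LeftLarge (#(FreeGroup A)) B₁ ∧ ¬ LeftLarge (#(FreeGroup A)) B₂ := by
  classical
  let B : Set (FreeGroup A) := {g | ∀ a, g.toWord.getLast? ≠ some (a, false)}
  refine ⟨B, Bᶜ, disjoint_compl_right, Set.union_compl_self B,
    FreeGroup.not_leftLarge_of_forall_getLast?_ne false fun g hg => hg,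
    FreeGroup.not_leftLarge_of_forall_getLast?_ne true fun g hg a ha => hg fun a' ha' => ?_⟩
  simp [ha] at ha'
end

section
/- Let G be an infinite group of cardinality κ, and suppose κ is a regular cardinal. Then G admits no maximal left invariant κ-bounded topology; that is, there is no topology τ on G such that (G, τ) is left topological, every nonempty τ-open set is left κ-large, τ has no isolated points, and every topology strictly finer than τ has an isolated point. -/
/-!
Enumerate `G` in order type `κ`; by regularity the initial segments `E x` are small and every
small subset of `G` lies in one of them. Transfinite recursion then yields points `c (x, b)`,
`b : Bool`, for which the translates `E x * {c (x, b)}` are pairwise disjoint, so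
`A = ⋃ x, E x * {c (x, true)}` and its complement are both left `κ`-thick.

A left thick set meets every left large set. Hence `A` is not `τ`-open, and declaring `A` and
`Aᶜ` open refines `τ` strictly. By maximality the refinement has an isolated point `x`: some
`τ`-open `U ∋ x` satisfies `U ∩ C ⊆ {x}`, where `C ∈ {A, Aᶜ}` contains `x`. But `U \ {x}` is
left large because `τ` is `κ`-bounded without isolated points, so it meets the thick set `C`.
-/

open scoped Pointwise
open Cardinal

universe u

variable {G : Type u}

/-- A topology on a group is left invariant if all left shifts are continuous. -/
def LeftInvariant [Group G] (τ : TopologicalSpace G) : Prop :=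
  ∀ g : G, @Continuous G G τ τ fun x => g * x

/-- A topology on a group of cardinality `κ` is `κ`-bounded if every nonempty open
set is left `κ`-large. -/
def KBounded [Group G] (κ : Cardinal.{u}) (τ : TopologicalSpace G) : Prop :=
  ∀ U : Set G, τ.IsOpen U → U.Nonempty → LeftLarge κ U

/-- A topology has no isolated points if no singleton is open. -/
def NoIsolatedPoints (τ : TopologicalSpace G) : Prop :=
  ∀ x : G, ¬ τ.IsOpen {x}

/-- A topology (with no isolated points) is maximal if every strictly finer topology
has an isolated point (an open singleton). -/
def MaximalTopology (τ : TopologicalSpace G) : Prop :=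
  ∀ τ' : TopologicalSpace G,
    (∀ U : Set G, τ.IsOpen U → τ'.IsOpen U) →
    (∃ V : Set G, τ'.IsOpen V ∧ ¬ τ.IsOpen V) →
    ∃ x : G, τ'.IsOpen {x}

theorem exists_cofinal_family_of_small_sets {α : Type u} {κ : Cardinal.{u}} (hα : #α = κ)
    (hκ : κ.IsRegular) :
    ∃ E : κ.ord.ToType → Set α, (∀ x, #(E x) < κ) ∧ ∀ s : Set α, #s < κ → ∃ x, s ⊆ E x := by
  obtain ⟨e⟩ : Nonempty (κ.ord.ToType ≃ α) := Cardinal.eq.1 (by rw [Cardinal.mk_ord_toType, hα])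
  refine ⟨fun x => e '' Set.Iio x, fun x => Cardinal.mk_image_le.trans_lt ?_, fun s hs => ?_⟩
  · simpa using Cardinal.mk_Iio_lt x
  have hbdd : ¬ IsCofinal (e.symm '' s) := fun hcof => by
    have := (Order.cof_le hcof).trans Cardinal.mk_image_le
    rw [Ordinal.cof_toType, hκ.cof_ord] at this
    exact this.not_gt hs
  obtain ⟨x, hx⟩ := not_isCofinal_iff.1 hbdd
  exact ⟨x, fun a ha => ⟨e.symm a, hx _ ⟨a, ha, rfl⟩, e.apply_symm_apply a⟩⟩

theorem exists_isOpen_inter_fiber_subset {X Y : Type*} {t : TopologicalSpace X} {f : X → Y}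
    {V : Set X} (hV : (t ⊓ .induced f ⊥).IsOpen V) {x : X} (hx : x ∈ V) :
    ∃ U, t.IsOpen U ∧ x ∈ U ∧ U ∩ f ⁻¹' {f x} ⊆ V := by
  have hVx := @IsOpen.mem_nhds _ (t ⊓ .induced f ⊥) _ _ hV hx
  rw [nhds_inf, @nhds_induced _ _ ⊥, @nhds_discrete Y ⊥ (@DiscreteTopology.mk Y ⊥ rfl),
    Filter.comap_pure, Filter.mem_inf_principal] at hVx
  obtain ⟨U, hUV, hU, hxU⟩ := (@mem_nhds_iff X t x _).1 hVx
  exact ⟨U, hU, hxU, fun y hy => hUV hy.1 hy.2⟩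

theorem isOpen_inf_induced_preimage {X Y : Type*} (t : TopologicalSpace X) (f : X → Y)
    (s : Set Y) : (t ⊓ .induced f ⊥).IsOpen (f ⁻¹' s) :=
  TopologicalSpace.le_def.1 inf_le_right _ (@isOpen_induced_iff _ _ ⊥ _ _ |>.2 ⟨s, trivial, rfl⟩)

section Group

variable [Group G] {κ : Cardinal.{u}}

theorem LeftLarge.mono {S T : Set G} (h : LeftLarge κ S) (hST : S ⊆ T) : LeftLarge κ T := by
  obtain ⟨F, hF, hcov⟩ := h
  exact ⟨F, hF, Set.eq_univ_of_univ_subset (hcov ▸ Set.mul_subset_mul_left hST)⟩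

theorem LeftLarge.diff_singleton (hκ : ℵ₀ ≤ κ) {U : Set G} (hU : LeftLarge κ U) {x : G}
    (hne : (U \ {x}).Nonempty) : LeftLarge κ (U \ {x}) := by
  obtain ⟨F, hF, hcov⟩ := hU
  obtain ⟨u, hu⟩ := hne
  -- the lost point `x` is recovered as `(x * u⁻¹) * u`
  refine ⟨F ∪ F * {x * u⁻¹}, ?_, Set.eq_univ_of_univ_subset fun g hg => ?_⟩
  · refine (Cardinal.mk_union_le _ _).trans_lt (Cardinal.add_lt_of_lt hκ hF ?_)
    exact (Cardinal.mk_mul_le.trans (by simp)).trans_lt hF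
  obtain ⟨f, hf, v, hv, rfl⟩ := hcov ▸ hg
  by_cases hvx : v = x
  · subst hvx
    exact ⟨f * (v * u⁻¹), Or.inr ⟨f, hf, _, rfl, rfl⟩, u, hu, by group⟩
  · exact ⟨f, Or.inl hf, v, ⟨hv, hvx⟩, rfl⟩

theorem KBounded.leftLarge_diff_singleton {τ : TopologicalSpace G} (hκ : ℵ₀ ≤ κ)
    (hbd : KBounded κ τ) (hni : NoIsolatedPoints τ) {U : Set G} (hU : τ.IsOpen U) {x : G}
    (hx : x ∈ U) : LeftLarge κ (U \ {x}) := by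
  refine (hbd U hU ⟨x, hx⟩).diff_singleton hκ (Set.nonempty_iff_ne_empty.2 fun h => hni x ?_)
  rwa [← (Set.sdiff_eq_empty.1 h).antisymm (Set.singleton_subset_iff.2 hx)]

theorem LeftThick.nonempty {A : Set G} (hA : LeftThick κ A) (hκ : κ ≠ 0) : A.Nonempty :=
  let ⟨a, ha, _⟩ := hA ∅ (by simpa [pos_iff_ne_zero] using hκ); ⟨a, ha⟩

theorem LeftThick.mono {S T : Set G} (h : LeftThick κ S) (hST : S ⊆ T) : LeftThick κ T :=
  fun F hF => let ⟨a, ha, hFa⟩ := h F hF; ⟨a, hST ha, hFa.trans hST⟩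

theorem LeftThick.not_leftLarge_compl {T : Set G} (hT : LeftThick κ T) : ¬ LeftLarge κ Tᶜ := by
  rintro ⟨F, hF, hcov⟩
  obtain ⟨t, -, hFt⟩ := hT F⁻¹ (by rwa [Cardinal.mk_inv])
  obtain ⟨f, hf, v, hv, rfl⟩ := hcov ▸ Set.mem_univ t
  exact hv (hFt ⟨f⁻¹, Set.inv_mem_inv.2 hf, _, rfl, by group⟩)

theorem leftThick_iUnion_mul_singleton {ι : Type*} (hκ : ℵ₀ ≤ κ) {E : ι → Set G}
    (hE : ∀ F : Set G, #F < κ → ∃ i, F ⊆ E i) (c : ι → G) :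
    LeftThick κ (⋃ i, E i * {c i}) := by
  intro F hF
  obtain ⟨i, hi⟩ := hE (insert 1 F) <| Cardinal.mk_insert_le.trans_lt <|
    Cardinal.add_lt_of_lt hκ hF (Cardinal.one_lt_aleph0.trans_le hκ)
  refine ⟨c i, Set.mem_iUnion_of_mem i ⟨1, hi (Set.mem_insert _ _), c i, rfl, one_mul _⟩, ?_⟩
  exact (Set.mul_subset_mul_right ((Set.subset_insert _ _).trans hi)).trans
    (Set.subset_iUnion (fun i => E i * {c i}) i)

theorem exists_pairwise_disjoint_mul_singleton {ι : Type u} (hG : #G = κ) (hκ : κ.IsRegular)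
    (hι : #ι ≤ κ) {E : ι → Set G} (hE : ∀ i, #(E i) < κ) :
    ∃ c : ι → G, Pairwise fun i j => Disjoint (E i * {c i}) (E j * {c j}) := by
  obtain ⟨r, _, hr⟩ := Cardinal.exists_ord_eq ι
  have hpred (i : ι) : #{j // r j i} < κ :=
    (Ordinal.card_typein i).symm.trans_lt ((Cardinal.card_typein_lt i hr).trans_le hι)
  -- `c i` must avoid these points so that `E i * {c i}` misses every earlier `E j * {c j}`
  let forbidden (i : ι) (c : ∀ j, r j i → G) : Set G :=
    ⋃ j : {j // r j i}, (E i)⁻¹ * E j * {c j.1 j.2}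
  have hforbidden (i : ι) (c : ∀ j, r j i → G) : #(forbidden i c) < #G := by
    rw [hG, Cardinal.card_iUnion_lt_iff_forall_of_isRegular hκ (hpred i)]
    intro j
    refine Cardinal.mk_mul_le.trans_lt ?_
    rw [Cardinal.mk_singleton, mul_one]
    exact Cardinal.mk_mul_le.trans_lt
      (Cardinal.mul_lt_of_lt hκ.aleph0_le (by rw [Cardinal.mk_inv]; exact hE i) (hE j))
  let c : ι → G := IsWellFounded.fix r fun i c => Classical.epsilon (· ∉ forbidden i c)
  have hc (i : ι) : c i ∉ ⋃ j : {j // r j i}, (E i)⁻¹ * E j * {c j} := by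
    rw [show c i = _ from IsWellFounded.fix_eq r _ i]
    exact Classical.epsilon_spec
      (Cardinal.compl_nonempty_of_mk_lt_mk (hforbidden i fun j _ => c j))
  have hdisj (i j : ι) (hji : r j i) : Disjoint (E i * {c i}) (E j * {c j}) := by
    refine Set.disjoint_left.2 ?_
    rintro _ ⟨e, he, _, rfl, rfl⟩ ⟨e', he', _, rfl, h⟩
    refine hc i (Set.mem_iUnion.2 ⟨⟨j, hji⟩, e⁻¹ * e', ⟨e⁻¹, Set.inv_mem_inv.2 he, e', he', rfl⟩,
      c j, rfl, ?_⟩)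
    simp only at h ⊢
    rw [mul_assoc, h, inv_mul_cancel_left]
  refine ⟨c, fun i j hij => ?_⟩
  rcases trichotomous_of r i j with h | rfl | h
  · exact (hdisj j i h).symm
  · exact absurd rfl hij
  · exact hdisj i j h

theorem exists_leftThick_and_leftThick_compl (hG : #G = κ) (hκ : κ.IsRegular) :
    ∃ A : Set G, LeftThick κ A ∧ LeftThick κ Aᶜ := by
  obtain ⟨E, hE, hcof⟩ := exists_cofinal_family_of_small_sets hG hκ
  have hcard : #(κ.ord.ToType × Bool) ≤ κ := by
    simpa [Cardinal.mk_ord_toType] using (Cardinal.mul_eq_left hκ.aleph0_le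
      ((Cardinal.natCast_lt_aleph0 (n := 2)).le.trans hκ.aleph0_le) two_ne_zero).le
  obtain ⟨c, hc⟩ := exists_pairwise_disjoint_mul_singleton hG hκ hcard
    (E := fun p => E p.1) fun p => hE p.1
  refine ⟨⋃ x, E x * {c (x, true)}, leftThick_iUnion_mul_singleton hκ.aleph0_le hcof _,
    (leftThick_iUnion_mul_singleton hκ.aleph0_le hcof fun x => c (x, false)).mono ?_⟩
  simp only [Set.subset_compl_iff_disjoint_left, Set.disjoint_iUnion_left,
    Set.disjoint_iUnion_right]
  exact fun x y => hc (by simp : (y, true) ≠ (x, false))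

end Group

theorem no_maximal_kBounded_topology_of_regular_general {G : Type u} [Group G]
    (κ : Cardinal.{u}) (hκ : #G = κ) (hreg : κ.IsRegular) :
    ¬ ∃ τ : TopologicalSpace G, LeftInvariant τ ∧ KBounded κ τ ∧
        NoIsolatedPoints τ ∧ MaximalTopology τ := by
  rintro ⟨τ, -, hbd, hni, hmax⟩
  obtain ⟨A, hA, hAc⟩ := exists_leftThick_and_leftThick_compl hκ hreg
  -- the coarsest refinement of `τ` in which `A` and `Aᶜ` are open
  let τ' := τ ⊓ .induced (· ∈ A) ⊥
  have hA_open : τ'.IsOpen A := by simpa using isOpen_inf_induced_preimage τ (· ∈ A) {True}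
  have hA_not_open : ¬ τ.IsOpen A := fun hA_open => hAc.not_leftLarge_compl <| by
    simpa using hbd A hA_open (hA.nonempty hreg.pos.ne')
  obtain ⟨x, hx⟩ := hmax τ' (fun U hU => TopologicalSpace.le_def.1 inf_le_left U hU)
    ⟨A, hA_open, hA_not_open⟩
  obtain ⟨U, hU, hxU, hUx⟩ := exists_isOpen_inter_fiber_subset hx rfl
  have hfiber : LeftThick κ ((· ∈ A) ⁻¹' {x ∈ A}) := by
    by_cases hxA : x ∈ A <;> simpa [hxA]
  refine hfiber.not_leftLarge_compl <|
    (hbd.leftLarge_diff_singleton hreg.aleph0_le hni hU hxU).mono fun y hy hyA => ?_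
  exact hy.2 (hUx ⟨hy.1, hyA⟩)

/-- An infinite group of regular cardinality `κ` admits no maximal
left invariant `κ`-bounded topology (without isolated points). -/
theorem no_maximal_kBounded_topology_of_regular {G : Type u} [Group G] [Infinite G]
    (κ : Cardinal.{u}) (hκ : #G = κ) (hreg : κ.IsRegular) :
    ¬ ∃ τ : TopologicalSpace G, LeftInvariant τ ∧ KBounded κ τ ∧
        NoIsolatedPoints τ ∧ MaximalTopology τ :=
  no_maximal_kBounded_topology_of_regular_general κ hκ hreg
end

section
/- Let G be a κ-normal group whose cardinality κ = |G| is a singular cardinal. Then G admits a maximal left invariant κ-bounded topology; that is, there exists a topology τ on G such that (G, τ) is left topological, every nonempty τ-open set is left κ-large, τ has no isolated points, and every topology strictly finer than τ has an isolated point. -/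
open scoped Pointwise
open Cardinal

universe u

variable {G : Type u}

/-
A set is left `κ`-large exactly when its complement is not left `κ`-thick. When `κ = |G|` is
singular and `G` is `κ`-normal, `G` is the union of fewer than `κ` normal subgroups `H` with
`|H| < κ`; choosing `H a ⊆ T` for each of them shows that thick sets are large. Hence any two thick
sets meet, the thick sets form a translation invariant filter, and Ellis' lemma yields an idempotent
ultrafilter `U` containing it. Declare `V` open when `g⁻¹ V ∈ U` for all `g ∈ V`. This topology is
left invariant, `κ`-bounded because members of `U` are large, and has no isolated points because
`G \ {1}` is thick. It is maximal because idempotence makes every member of `U` contain an open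
member of `U`, and such a set cuts any strictly finer open set down to a point.
-/

open Set Filter Topology

attribute [local instance] Ultrafilter.mul Ultrafilter.semigroup

section Thick

variable [Group G] {κ : Cardinal.{u}} {A S T T₁ T₂ : Set G}

lemma LeftThick.mono_s7 (hT : LeftThick κ T₁) (h : T₁ ⊆ T₂) : LeftThick κ T₂ := fun F hF =>
  let ⟨a, ha, hFa⟩ := hT F hF
  ⟨a, h ha, hFa.trans h⟩

lemma LeftThick.nonempty_s7 (hκ : κ ≠ 0) (hT : LeftThick κ T) : T.Nonempty :=
  let ⟨a, ha, _⟩ := hT ∅ (by simpa [pos_iff_ne_zero] using hκ)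
  ⟨a, ha⟩

lemma leftThick_iff (hκ : ℵ₀ ≤ κ) :
    LeftThick κ T ↔ ∀ F : Set G, #F < κ → ∃ a, ∀ f ∈ F, f * a ∈ T := by
  refine ⟨fun hT F hF => ?_, fun hT F hF => ?_⟩
  · obtain ⟨a, -, hFa⟩ := hT F hF
    exact ⟨a, fun f hf => hFa (mul_mem_mul hf rfl)⟩
  · obtain ⟨a, ha⟩ := hT (insert 1 F) (mk_insert_le.trans_lt (add_one_lt_of_lt hκ hF))
    refine ⟨a, by simpa using ha 1 (mem_insert _ _), ?_⟩
    rintro _ ⟨f, hf, _, rfl, rfl⟩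
    exact ha f (mem_insert_of_mem _ hf)

lemma LeftThick.biInter_preimage_mul_left (hκ : ℵ₀ ≤ κ) (hT : LeftThick κ T) (hS : #S < κ) :
    LeftThick κ (⋂ s ∈ S, (s * ·) ⁻¹' T) := by
  rw [leftThick_iff hκ] at hT ⊢
  intro F hF
  obtain ⟨a, ha⟩ := hT (S * F) (mk_mul_le.trans_lt (mul_lt_of_lt hκ hS hF))
  exact ⟨a, fun f hf => mem_iInter₂.2 fun s hs => by
    simpa [mul_assoc] using ha _ (mul_mem_mul hs hf)⟩

lemma LeftThick.preimage_mul_left (hκ : ℵ₀ ≤ κ) (hT : LeftThick κ T) (g : G) :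
    LeftThick κ ((g * ·) ⁻¹' T) := by
  simpa using hT.biInter_preimage_mul_left hκ (S := {g}) (by simpa using one_lt_aleph0.trans_le hκ)

lemma leftLarge_iff_not_leftThick_compl (hκ : ℵ₀ ≤ κ) : LeftLarge κ A ↔ ¬ LeftThick κ Aᶜ := by
  rw [leftThick_iff hκ]
  constructor
  · rintro ⟨F, hF, hFA⟩ hthick
    obtain ⟨a, ha⟩ := hthick F⁻¹ (by rwa [mk_inv])
    obtain ⟨f, hf, b, hb, rfl⟩ : a ∈ F * A := hFA ▸ mem_univ a
    exact ha f⁻¹ (inv_mem_inv.2 hf) (by simpa using hb)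
  · intro h
    push Not at h
    obtain ⟨F, hF, hFA⟩ := h
    refine ⟨F⁻¹, by rwa [mk_inv], eq_univ_of_forall fun a => ?_⟩
    obtain ⟨f, hf, hfa⟩ := hFA a
    exact ⟨f⁻¹, inv_mem_inv.2 hf, f * a, not_not.1 hfa, inv_mul_cancel_left f a⟩

lemma leftThick_compl_of_mk_lt (hκ : ℵ₀ ≤ κ) (hG : κ ≤ #G) (hS : #S < κ) : LeftThick κ Sᶜ := by
  rw [← not_not (a := LeftThick κ Sᶜ), ← leftLarge_iff_not_leftThick_compl hκ]
  rintro ⟨F, hF, hFS⟩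
  have := mk_mul_le.trans_lt (mul_lt_of_lt hκ hF hS)
  rw [hFS, mk_univ] at this
  exact this.not_ge hG

/-- The sets of common witnesses `⋂ f ∈ F, f⁻¹ Tᵢ` are thick, and they meet because a large set
has no thick complement. -/
lemma LeftThick.inter (hκ : ℵ₀ ≤ κ) (hlarge : ∀ T : Set G, LeftThick κ T → LeftLarge κ T)
    (h₁ : LeftThick κ T₁) (h₂ : LeftThick κ T₂) : LeftThick κ (T₁ ∩ T₂) := by
  rw [leftThick_iff hκ]
  intro F hF
  obtain ⟨a, ha₁, ha₂⟩ :
      ((⋂ f ∈ F, (f * ·) ⁻¹' T₁) ∩ ⋂ f ∈ F, (f * ·) ⁻¹' T₂).Nonempty := by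
    by_contra h
    refine (leftLarge_iff_not_leftThick_compl hκ).1
      (hlarge _ (h₂.biInter_preimage_mul_left hκ hF)) ?_
    exact (h₁.biInter_preimage_mul_left hκ hF).mono_s7 fun a ha ha' => h ⟨a, ha, ha'⟩
  exact ⟨a, fun f hf => ⟨mem_iInter₂.1 ha₁ f hf, mem_iInter₂.1 ha₂ f hf⟩⟩

def leftThickFilter (hκ : ℵ₀ ≤ κ) (hlarge : ∀ T : Set G, LeftThick κ T → LeftLarge κ T) :
    Filter G where
  sets := {T | LeftThick κ T}
  univ_sets _ _ := ⟨1, mem_univ _, subset_univ _⟩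
  sets_of_superset hT h := hT.mono_s7 h
  inter_sets h₁ h₂ := h₁.inter hκ hlarge h₂

lemma neBot_leftThickFilter (hκ : ℵ₀ ≤ κ) (hlarge : ∀ T : Set G, LeftThick κ T → LeftLarge κ T) :
    (leftThickFilter hκ hlarge).NeBot :=
  forall_mem_nonempty_iff_neBot.1 fun _ hT => LeftThick.nonempty_s7 (aleph0_pos.trans_le hκ).ne' hT

lemma LeftLarge.of_preimage_mul_left {g : G} (h : LeftLarge κ ((g * ·) ⁻¹' A)) :
    LeftLarge κ A := by
  obtain ⟨F, hF, hFA⟩ := h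
  refine ⟨F * {g⁻¹}, by rw [mul_singleton]; exact mk_image_le.trans_lt hF,
    eq_univ_of_forall fun x => ?_⟩
  obtain ⟨f, hf, a, ha, rfl⟩ : x ∈ F * _ := hFA ▸ mem_univ x
  exact ⟨f * g⁻¹, mul_mem_mul hf rfl, g * a, ha, by group⟩

lemma leftLarge_of_mem_ultrafilter (hκ : ℵ₀ ≤ κ) {U : Ultrafilter G}
    (hU : ∀ T : Set G, LeftThick κ T → T ∈ U) (hA : A ∈ U) : LeftLarge κ A := by
  rw [leftLarge_iff_not_leftThick_compl hκ]
  exact fun h => U.compl_mem_iff_notMem.1 (hU _ h) hA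

end Thick

section Cover

lemma exists_cover_indexed_by_cof (α : Type u) (hα : ℵ₀ ≤ #α) :
    ∃ (ι : Type u) (s : ι → Set α), #ι = (#α).ord.cof ∧ (∀ i, #(s i) < #α) ∧
      ∀ x, ∃ i, x ∈ s i := by
  obtain ⟨e⟩ : Nonempty (α ≃ (#α).ord.ToType) := Cardinal.eq.1 (by simp)
  obtain ⟨S, hS, hScof⟩ := Order.exists_cof_eq (#α).ord.ToType
  refine ⟨S, fun i => e ⁻¹' Iic i.1, by rw [hScof, Ordinal.cof_toType], fun i => ?_, fun x => ?_⟩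
  · rw [mk_preimage_equiv]
    simpa using mk_Iic_lt i.1 (by simp) (by simpa using hα)
  · obtain ⟨i, hi, hxi⟩ := hS (e x)
    exact ⟨⟨i, hi⟩, hxi⟩

variable [Group G] {κ : Cardinal.{u}} {T : Set G}

lemma LeftThick.leftLarge (hG : #G = κ) (hsing : Singular κ) (hnorm : KNormal G κ)
    (hT : LeftThick κ T) : LeftLarge κ T := by
  subst hG
  obtain ⟨ι, s, hι, hs, hcover⟩ := exists_cover_indexed_by_cof G hsing.1
  choose H hHnormal hH hsH using fun i => hnorm (s i) (hs i)
  choose a ha using fun i => (leftThick_iff hsing.1).1 hT _ (hH i)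
  refine ⟨range fun i => (a i)⁻¹, mk_range_le.trans_lt (hι ▸ hsing.2),
    eq_univ_of_forall fun g => ?_⟩
  obtain ⟨i, hi⟩ := hcover g
  -- normality lets the single witness `a i` serve all of `H i`: `a g = (a g a⁻¹) a`
  have hconj : a i * g * (a i)⁻¹ ∈ H i := (hHnormal i).conj_mem g (hsH i hi) (a i)
  have hag : a i * g ∈ T := by simpa using ha i _ hconj
  exact ⟨(a i)⁻¹, mem_range_self i, a i * g, hag, inv_mul_cancel_left _ _⟩

end Cover

theorem Ultrafilter.exists_idempotent_le {M : Type*} [Semigroup M] (f : Filter M) [f.NeBot]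
    (hf : ∀ s ∈ f, ∀ m, (m * ·) ⁻¹' s ∈ f) : ∃ U : Ultrafilter M, U * U = U ∧ ↑U ≤ f := by
  have hclosed : IsClosed {U : Ultrafilter M | ↑U ≤ f} := by
    have : {U : Ultrafilter M | ↑U ≤ f} = ⋂ s ∈ f, {U | s ∈ U} := by ext; simp [Filter.le_def]
    exact this ▸ isClosed_biInter fun s _ => ultrafilter_isClosed_basic s
  obtain ⟨U, hUf, hUU⟩ := exists_idempotent_in_compact_subsemigroup
    Ultrafilter.continuous_mul_left _ (f.exists_ultrafilter_le) hclosed.isCompact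
    fun U _ V hV s hs => (eventually_mul U V (· ∈ s)).2 (.of_forall fun m => hV (hf s hs m))
  exact ⟨U, hUU, hUf⟩

namespace Ultrafilter

variable [Group G] (U : Ultrafilter G)

@[reducible] def leftTopology : TopologicalSpace G where
  IsOpen V := ∀ g ∈ V, (g * ·) ⁻¹' V ∈ U
  isOpen_univ _ _ := univ_mem
  isOpen_inter _ _ hV hW g hg := inter_mem (hV g hg.1) (hW g hg.2)
  isOpen_sUnion _ hs := fun g ⟨V, hV, hgV⟩ =>
    mem_of_superset (hs V hV g hgV) fun _ hy => mem_sUnion_of_mem hy hV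

lemma isOpen_leftTopology {V : Set G} :
    IsOpen[U.leftTopology] V ↔ ∀ g ∈ V, (g * ·) ⁻¹' V ∈ U := Iff.rfl

lemma leftInvariant_leftTopology : LeftInvariant U.leftTopology := fun g =>
  continuous_def.2 fun V hV h hh => by simpa [preimage_preimage, mul_assoc] using hV (g * h) hh

lemma kBounded_leftTopology {κ : Cardinal.{u}} (hU : ∀ A ∈ U, LeftLarge κ A) :
    KBounded κ U.leftTopology := by
  rintro V hV ⟨g, hg⟩
  exact (hU _ (hV g hg)).of_preimage_mul_left

lemma noIsolatedPoints_leftTopology (hU : ({1} : Set G) ∉ U) :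
    NoIsolatedPoints U.leftTopology := by
  intro x hx
  have : (x * ·) ⁻¹' {x} = ({1} : Set G) := by ext; simp
  exact hU (this ▸ hx x rfl)

lemma exists_isOpen_leftTopology_subset (hU : U * U = U) {A : Set G} (hA : A ∈ U) :
    ∃ B ⊆ A, B ∈ U ∧ IsOpen[U.leftTopology] B := by
  -- `C ∈ U * U` unfolds to `{m | m⁻¹ C ∈ U} ∈ U`
  have hidem : ∀ C ∈ U, {m | (m * ·) ⁻¹' C ∈ U} ∈ U := fun C hC => by rwa [← hU] at hC
  refine ⟨A ∩ {a | (a * ·) ⁻¹' A ∈ U}, inter_subset_left, inter_mem hA (hidem A hA), ?_⟩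
  rintro b ⟨-, hb⟩
  refine mem_of_superset (inter_mem hb (hidem _ hb)) fun y ⟨hy, hy'⟩ => ⟨hy, ?_⟩
  simpa [preimage, mul_assoc] using hy'

lemma maximalTopology_leftTopology (hU : U * U = U) : MaximalTopology U.leftTopology := by
  rintro τ hle ⟨V, hV, hVU⟩
  obtain ⟨x, hxV, hx⟩ : ∃ x ∈ V, (x * ·) ⁻¹' V ∉ U := by
    by_contra! h
    exact hVU h
  obtain ⟨B, hBV, hB, hBopen⟩ :=
    U.exists_isOpen_leftTopology_subset hU (U.compl_mem_iff_notMem.2 hx)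
  have hO : IsOpen[U.leftTopology] (insert 1 B) := by
    rintro g (rfl | hg)
    · exact mem_of_superset hB fun y hy => by simp [hy]
    · exact mem_of_superset (hBopen g hg) fun y hy => mem_insert_of_mem _ hy
  have hxO : IsOpen[U.leftTopology] ((x⁻¹ * ·) ⁻¹' insert 1 B) :=
    @Continuous.isOpen_preimage G G U.leftTopology U.leftTopology _
      (U.leftInvariant_leftTopology x⁻¹) _ hO
  have hxOV : (x⁻¹ * ·) ⁻¹' insert 1 B ∩ V = {x} := by
    ext y
    constructor
    · rintro ⟨hy | hy, hyV⟩
      · simpa [inv_mul_eq_one, eq_comm] using hy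
      · exact absurd (by simpa using hyV) (hBV hy)
    · rintro rfl
      simp [hxV]
  exact ⟨x, hxOV ▸ @IsOpen.inter G τ _ _ (hle _ hxO) hV⟩

end Ultrafilter

/-- Every `κ`-normal group of singular cardinality `κ` admits a
maximal left invariant `κ`-bounded topology. -/
theorem exists_maximal_kBounded_topology_of_kNormal_singular {G : Type u} [Group G]
    (κ : Cardinal.{u}) (hκ : #G = κ) (hsing : Singular κ) (hnorm : KNormal G κ) :
    ∃ τ : TopologicalSpace G, LeftInvariant τ ∧ KBounded κ τ ∧
      NoIsolatedPoints τ ∧ MaximalTopology τ := by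
  have hlarge : ∀ T : Set G, LeftThick κ T → LeftLarge κ T :=
    fun _ hT => hT.leftLarge hκ hsing hnorm
  have := neBot_leftThickFilter hsing.1 hlarge
  obtain ⟨U, hUU, hUthick⟩ := Ultrafilter.exists_idempotent_le (leftThickFilter hsing.1 hlarge)
    fun _ hT g => hT.preimage_mul_left hsing.1 g
  have hthick_mem : ∀ T : Set G, LeftThick κ T → T ∈ U := fun _ hT => hUthick hT
  have hone : ({1} : Set G)ᶜ ∈ U := hthick_mem _ <|
    leftThick_compl_of_mk_lt hsing.1 hκ.ge (by simpa using one_lt_aleph0.trans_le hsing.1)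
  exact ⟨U.leftTopology, U.leftInvariant_leftTopology,
    U.kBounded_leftTopology fun _ => leftLarge_of_mem_ultrafilter hsing.1 hthick_mem,
    U.noIsolatedPoints_leftTopology (U.compl_mem_iff_notMem.1 hone),
    U.maximalTopology_leftTopology hUU⟩
end

section
/- Let G be an Abelian group whose cardinality κ = |G| is a singular cardinal. Then G admits a maximal translation invariant κ-bounded topology; that is, there exists a topology τ on G such that all translations x ↦ g + x are τ-continuous, every nonempty τ-open set is κ-large, τ has no isolated points, and every topology strictly finer than τ has an isolated point. -/
open scoped Pointwise
open Cardinal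

universe u

variable {G : Type u}

/-- `A` is `κ`-large in an Abelian group: `G = F + A` for some `F` with `|F| < κ`. -/
def AddLarge [AddCommGroup G] (κ : Cardinal.{u}) (A : Set G) : Prop :=
  ∃ F : Set G, #F < κ ∧ F + A = Set.univ

/-- A topology on an Abelian group is translation invariant if all translations
`x ↦ g + x` are continuous. -/
def TranslationInvariant [AddCommGroup G] (τ : TopologicalSpace G) : Prop :=
  ∀ g : G, @Continuous G G τ τ fun x => g + x

/-- A translation invariant topology on an Abelian group of cardinality `κ` is
`κ`-bounded if every nonempty open set is `κ`-large. -/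
def AddKBounded [AddCommGroup G] (κ : Cardinal.{u}) (τ : TopologicalSpace G) : Prop :=
  ∀ U : Set G, τ.IsOpen U → U.Nonempty → AddLarge κ U

/-!
Call `T ⊆ G` thick if it contains a translate of every set of size `< κ`; these are exactly the
complements of the sets that are not `κ`-large. Because `κ = |G|` is singular, `G` is a union of
fewer than `κ` sets of size `< κ`, and this makes thick sets closed under intersection. The
ultrafilters containing all thick sets then form a nonempty closed left ideal of `(βG, +)`, which
by Ellis–Numakura contains an idempotent `p`; every member of `p` is `κ`-large.

Declare `U` open when `-x + U ∈ p` for all `x ∈ U`. This topology is translation invariant and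
`κ`-bounded, and `{x}` is open only if `{0} ∈ p`, which is impossible as `{0}` is not large.
Idempotence makes `{0} ∪ A⋆` open for every `A ∈ p`. So if `V` is open in a finer topology but
not in this one, some `x ∈ V` has `A = G \ (-x + V) ∈ p`, and `x + ({0} ∪ A⋆)` meets `V` only in
`x`.
-/

open Filter Set Topology

attribute [local instance] Ultrafilter.add Ultrafilter.addSemigroup

theorem exists_iUnion_eq_univ_of_singular {α : Type u} (h : Singular #α) :
    ∃ (ι : Type u) (E : ι → Set α), #ι < #α ∧ (∀ i, #(E i) < #α) ∧ ⋃ i, E i = Set.univ := by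
  classical
  obtain ⟨_, _, hα⟩ := exists_ord_eq_type_lt α
  obtain ⟨S, hS, hSc⟩ := Order.exists_cof_eq α
  refine ⟨S, fun s => Iic s.1, ?_, fun s => ?_, ?_⟩
  · rw [hSc, ← Ordinal.cof_type, ← hα]
    exact h.2
  · dsimp only
    rw [show Iic s.1 = insert s.1 (Iio s.1) from Iio_insert.symm]
    exact mk_insert_le.trans_lt
      (add_lt_of_lt h.1 (mk_Iio_lt _ hα) (one_lt_aleph0.trans_le h.1))
  · refine eq_univ_of_forall fun a => ?_
    obtain ⟨b, hb, hab⟩ := hS a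
    exact mem_iUnion.2 ⟨⟨b, hb⟩, hab⟩

def AddThick [Add G] (κ : Cardinal.{u}) (T : Set G) : Prop :=
  ∀ F : Set G, #F < κ → ∃ x : G, ∀ f ∈ F, x + f ∈ T

theorem AddThick.preimage_add_left [AddGroup G] {κ : Cardinal.{u}} {T : Set G}
    (h : AddThick κ T) (x : G) : AddThick κ ((x + ·) ⁻¹' T) := by
  intro F hF
  obtain ⟨w, hw⟩ := h F hF
  refine ⟨-x + w, fun f hf => ?_⟩
  simpa only [mem_preimage, add_neg_cancel_left, add_assoc] using hw f hf

section Thick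

variable [AddCommGroup G] {κ : Cardinal.{u}}

theorem addThick_compl_iff_not_addLarge {A : Set G} : AddThick κ Aᶜ ↔ ¬ AddLarge κ A := by
  constructor
  · rintro hT ⟨F, hF, hFA⟩
    obtain ⟨x, hx⟩ := hT (-F) (by rwa [mk_neg])
    obtain ⟨f, hf, a, ha, rfl⟩ := mem_add.1 (hFA.symm ▸ mem_univ x)
    exact hx (-f) (neg_mem_neg.2 hf) (by rwa [add_neg_cancel_comm])
  · intro h F hF
    by_contra! hx
    refine h ⟨-F, by rwa [mk_neg], eq_univ_of_forall fun x => ?_⟩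
    obtain ⟨f, hf, hxf⟩ := hx x
    exact mem_add.2 ⟨-f, neg_mem_neg.2 hf, x + f, not_not.1 hxf, by abel⟩

theorem AddLarge.of_preimage_add_left {U : Set G} {x : G} (h : AddLarge κ ((x + ·) ⁻¹' U)) :
    AddLarge κ U := by
  obtain ⟨F, hF, hFU⟩ := h
  refine ⟨-x +ᵥ F, by rwa [mk_vadd_set], eq_univ_of_forall fun g => ?_⟩
  obtain ⟨f, hf, y, hy, rfl⟩ := mem_add.1 (hFU.symm ▸ mem_univ g)
  exact mem_add.2 ⟨-x + f, vadd_mem_vadd_set hf, x + y, hy, by abel⟩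

theorem not_addLarge_singleton (a : G) : ¬ AddLarge #G {a} := by
  rintro ⟨F, hF, hFa⟩
  have hcard : #(F + {a} : Set G) = #F := by rw [add_singleton, mk_image_eq (add_left_injective a)]
  rw [hFa, mk_univ] at hcard
  exact hF.ne' hcard

theorem AddThick.inter (hG : Singular #G) {T₁ T₂ : Set G} (h₁ : AddThick #G T₁)
    (h₂ : AddThick #G T₂) : AddThick #G (T₁ ∩ T₂) := by
  obtain ⟨ι, E, hι, hE, hcover⟩ := exists_iUnion_eq_univ_of_singular hG
  intro F hF
  -- Push each `E i + F` into `T₂` by some `x i`, then all translates `x i + F` into `T₁` at once.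
  choose x hx using fun i => h₂ (E i + F) (mk_add_le.trans_lt (mul_lt_of_lt hG.1 (hE i) hF))
  obtain ⟨h, hh⟩ := h₁ (range x + F)
    (mk_add_le.trans_lt (mul_lt_of_lt hG.1 (mk_range_le.trans_lt hι) hF))
  obtain ⟨i, hi⟩ := mem_iUnion.1 (hcover ▸ mem_univ h)
  refine ⟨h + x i, fun f hf => ⟨?_, ?_⟩⟩
  · simpa only [add_assoc] using hh _ (add_mem_add (mem_range_self i) hf)
  · simpa only [add_left_comm, add_assoc] using hx i _ (add_mem_add hi hf)

end Thick

def thickUltrafilters [Add G] (κ : Cardinal.{u}) : Set (Ultrafilter G) :=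
  {u | ∀ T : Set G, AddThick κ T → T ∈ u}

theorem isClosed_thickUltrafilters [Add G] (κ : Cardinal.{u}) :
    IsClosed (thickUltrafilters (G := G) κ) := by
  simp only [thickUltrafilters, ofPred_forall]
  exact isClosed_iInter fun T => isClosed_iInter fun _ => ultrafilter_isClosed_basic T

section ThickUltrafilters

variable [AddCommGroup G] {κ : Cardinal.{u}} {v : Ultrafilter G}

theorem AddLarge.of_mem_thickUltrafilters (hv : v ∈ thickUltrafilters κ) {A : Set G}
    (hA : A ∈ v) : AddLarge κ A := by
  by_contra hA'
  exact Ultrafilter.compl_mem_iff_notMem.1 (hv _ (addThick_compl_iff_not_addLarge.2 hA')) hA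

theorem add_mem_thickUltrafilters (u : Ultrafilter G) (hv : v ∈ thickUltrafilters κ) :
    u + v ∈ thickUltrafilters κ := by
  intro T hT
  by_contra hTn
  have hTc : ∀ᶠ x in (u : Filter G), ∀ᶠ y in (v : Filter G), x + y ∈ Tᶜ :=
    Ultrafilter.compl_mem_iff_notMem.2 hTn
  obtain ⟨x, hx⟩ := hTc.exists
  -- `-x + T` is thick, yet its complement lies in `v` and so is large.
  have hlarge : AddLarge κ ((x + ·) ⁻¹' T)ᶜ := AddLarge.of_mem_thickUltrafilters hv hx
  exact addThick_compl_iff_not_addLarge.1 (by rw [compl_compl]; exact hT.preimage_add_left x) hlarge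

theorem thickUltrafilters_nonempty (hG : Singular #G) :
    (thickUltrafilters (G := G) #G).Nonempty := by
  let D : Filter G :=
    { sets := {T | AddThick #G T}
      univ_sets := fun _ _ => ⟨0, fun _ _ => mem_univ _⟩
      sets_of_superset := fun hT hTU F hF => (hT F hF).imp fun _ hx f hf => hTU (hx f hf)
      inter_sets := AddThick.inter hG }
  have : D.NeBot := by
    refine neBot_iff.2 fun hD => ?_
    obtain ⟨x, hx⟩ := (hD ▸ mem_bot : ∅ ∈ D) {0}
      (by rw [mk_singleton]; exact one_lt_aleph0.trans_le hG.1)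
    exact hx 0 rfl
  exact ⟨Ultrafilter.of D, fun T hT => Ultrafilter.of_le D hT⟩

end ThickUltrafilters

abbrev translationTopology [Add G] (p : Filter G) : TopologicalSpace G where
  IsOpen U := ∀ x ∈ U, (x + ·) ⁻¹' U ∈ p
  isOpen_univ _ _ := univ_mem
  isOpen_inter _ _ hU hV x hx := inter_mem (hU x hx.1) (hV x hx.2)
  isOpen_sUnion _ hs _ := fun ⟨U, hUs, hxU⟩ =>
    mem_of_superset (hs U hUs _ hxU) fun _ hy => ⟨U, hUs, hy⟩

section TranslationTopology

variable {p : Filter G}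

theorem isOpen_translationTopology_iff [Add G] {U : Set G} :
    IsOpen[translationTopology p] U ↔ ∀ x ∈ U, (x + ·) ⁻¹' U ∈ p :=
  Iff.rfl

theorem IsOpen.preimage_add_left_translationTopology [AddSemigroup G] {U : Set G}
    (hU : IsOpen[translationTopology p] U) (g : G) :
    IsOpen[translationTopology p] ((g + ·) ⁻¹' U) := fun x hx => by
  simpa only [preimage_preimage, add_assoc] using hU _ hx

theorem translationInvariant_translationTopology [AddCommGroup G] (p : Filter G) :
    TranslationInvariant (translationTopology p) := fun g =>
  @continuous_def _ _ (translationTopology p) (translationTopology p) _ |>.2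
    fun _ hU => hU.preimage_add_left_translationTopology g

theorem isOpen_singleton_translationTopology_iff [AddGroup G] {x : G} :
    IsOpen[translationTopology p] {x} ↔ {0} ∈ p := by
  simp [isOpen_translationTopology_iff, preimage_add_left_singleton]

theorem addKBounded_translationTopology [AddCommGroup G] {κ : Cardinal.{u}}
    (hp : ∀ A ∈ p, AddLarge κ A) : AddKBounded κ (translationTopology p) :=
  fun _ hU ⟨x, hx⟩ => (hp _ (hU x hx)).of_preimage_add_left

end TranslationTopology

/-- The set `A⋆` of Hindman and Strauss. -/
def addStar [Add G] (p : Ultrafilter G) (A : Set G) : Set G :=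
  {y ∈ A | (y + ·) ⁻¹' A ∈ p}

section AddStar

variable {p : Ultrafilter G} {A : Set G}

theorem addStar_mem [Add G] (hp : p + p = p) (hA : A ∈ p) : addStar p A ∈ p := by
  exact inter_mem hA (hp.symm ▸ hA : A ∈ p + p)

theorem preimage_add_left_addStar [AddSemigroup G] (x : G) :
    (x + ·) ⁻¹' addStar p A = addStar p ((x + ·) ⁻¹' A) := by
  ext y
  simp only [addStar, mem_preimage, mem_ofPred_eq, preimage_preimage, add_assoc]

theorem isOpen_insert_zero_addStar [AddMonoid G] (hp : p + p = p) (hA : A ∈ p) :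
    IsOpen[translationTopology (p : Filter G)] (insert 0 (addStar p A)) := by
  rintro w (rfl | hw)
  · simpa only [zero_add, preimage_id'] using
      mem_of_superset (addStar_mem hp hA) (subset_insert _ _)
  · refine mem_of_superset ?_ (preimage_mono (subset_insert _ _))
    rw [preimage_add_left_addStar]
    exact addStar_mem hp hw.2

end AddStar

theorem maximalTopology_translationTopology [AddGroup G] {p : Ultrafilter G} (hp : p + p = p) :
    MaximalTopology (translationTopology (p : Filter G)) := by
  rintro τ' hfiner ⟨V, hV, hVn⟩
  obtain ⟨x, hxV, hx⟩ : ∃ x ∈ V, (x + ·) ⁻¹' V ∉ p := by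
    by_contra! h
    exact hVn h
  have hA : ((x + ·) ⁻¹' V)ᶜ ∈ p := Ultrafilter.compl_mem_iff_notMem.2 hx
  have hU := (isOpen_insert_zero_addStar hp hA).preimage_add_left_translationTopology (-x)
  refine ⟨x, show IsOpen[τ'] {x} from ?_⟩
  -- The translate by `x` of the open set `{0} ∪ A⋆` meets `V` only in `x`.
  convert @IsOpen.inter G τ' _ _ (hfiner _ hU) hV using 1
  ext y
  constructor
  · rintro rfl
    simpa using hxV
  · rintro ⟨h0 | hy, hyV⟩
    · exact (neg_add_eq_zero.1 h0).symm
    · exact absurd (by simpa using hyV) hy.1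

/-- Every Abelian group of singular cardinality `κ` admits a maximal
translation invariant `κ`-bounded topology. -/
theorem addCommGroup_exists_maximal_kBounded_topology_of_singular
    {G : Type u} [AddCommGroup G] (κ : Cardinal.{u}) (hκ : #G = κ) (hsing : Singular κ) :
    ∃ τ : TopologicalSpace G, TranslationInvariant τ ∧ AddKBounded κ τ ∧
      NoIsolatedPoints τ ∧ MaximalTopology τ := by
  subst hκ
  obtain ⟨p, hpC, hpp⟩ := exists_idempotent_in_compact_add_subsemigroup
    Ultrafilter.continuous_add_left _ (thickUltrafilters_nonempty hsing)
    (isClosed_thickUltrafilters _).isCompact fun u _ v hv => add_mem_thickUltrafilters u hv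
  have hlarge : ∀ A ∈ p, AddLarge #G A := fun _ => AddLarge.of_mem_thickUltrafilters hpC
  refine ⟨translationTopology (p : Filter G), translationInvariant_translationTopology _,
    addKBounded_translationTopology hlarge, fun x hx => ?_, maximalTopology_translationTopology hpp⟩
  exact not_addLarge_singleton 0 (hlarge _ (isOpen_singleton_translationTopology_iff.1 hx))
end

section
/- Let G be a κ-normal group and A ⊆ G. Then A is left κ-large if and only if A is right κ-large if and only if A is κ-large; and A is left κ-thick if and only if A is right κ-thick if and only if A is κ-thick. -/
open scoped Pointwise
open Cardinal

universe u

variable {G : Type u}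

lemma normal_comm [Group G] (H : Subgroup G) (hn : H.Normal) (A : Set G) :
    (H : Set G) * A = A * (H : Set G) := by
  ext x
  simp only [Set.mem_mul]
  constructor
  · rintro ⟨h, hh, a, ha, rfl⟩
    exact ⟨a, ha, a⁻¹ * h * a, by simpa using hn.conj_mem h hh a⁻¹, by group⟩
  · rintro ⟨a, ha, h, hh, rfl⟩
    exact ⟨a * h * a⁻¹, hn.conj_mem h hh a, a, ha, by group⟩

/-- In a `κ`-normal group the three "large" notions coincide and the
three "thick" notions coincide. -/
theorem kNormal_large_thick_coincide {G : Type u} [Group G]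
    (κ : Cardinal.{u}) (hnorm : KNormal G κ) (A : Set G) :
    (LeftLarge κ A ↔ RightLarge κ A) ∧ (RightLarge κ A ↔ KLarge κ A) ∧
    (LeftThick κ A ↔ RightThick κ A) ∧ (RightThick κ A ↔ KThick κ A) := by
  have one_mem : ∀ (H : Subgroup G), ({(1:G)} : Set G) ⊆ (H : Set G) := by
    intro H x hx; simp at hx; subst hx; exact H.one_mem
  -- Large cycle
  have LR : LeftLarge κ A → RightLarge κ A := by
    rintro ⟨F, hF, hFA⟩
    obtain ⟨H, hn, hHκ, hFH⟩ := hnorm F hF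
    refine ⟨H, hHκ, Set.eq_univ_of_univ_subset ?_⟩
    rw [← normal_comm H hn, ← hFA]
    exact Set.mul_subset_mul_right hFH
  have RK : RightLarge κ A → KLarge κ A := by
    rintro ⟨F, hF, hFA⟩
    obtain ⟨H, hn, hHκ, hFH⟩ := hnorm F hF
    refine ⟨H, hHκ, Set.eq_univ_of_univ_subset ?_⟩
    rw [← hFA]
    calc A * F ⊆ A * (H : Set G) := Set.mul_subset_mul_left hFH
      _ = {1} * A * (H : Set G) := by rw [Set.singleton_one, one_mul]
      _ ⊆ (H : Set G) * A * (H : Set G) :=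
        Set.mul_subset_mul_right (Set.mul_subset_mul_right (one_mem H))
  have KL : KLarge κ A → LeftLarge κ A := by
    rintro ⟨F, hF, hFA⟩
    obtain ⟨H, hn, hHκ, hFH⟩ := hnorm F hF
    refine ⟨H, hHκ, Set.eq_univ_of_univ_subset ?_⟩
    rw [← hFA]
    calc F * A * F ⊆ (H : Set G) * A * (H : Set G) :=
        Set.mul_subset_mul (Set.mul_subset_mul hFH (subset_refl A)) hFH
      _ = (H : Set G) * A := by
        rw [mul_assoc, ← normal_comm H hn A, ← mul_assoc, coe_mul_coe]
  -- Thick cycle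
  have ltr : LeftThick κ A → RightThick κ A := by
    intro h F hF
    obtain ⟨H, hn, hHκ, hFH⟩ := hnorm F hF
    obtain ⟨a, ha, haA⟩ := h (H : Set G) hHκ
    refine ⟨a, ha, ?_⟩
    calc {a} * F ⊆ {a} * (H : Set G) := Set.mul_subset_mul_left hFH
      _ = (H : Set G) * {a} := (normal_comm H hn {a}).symm
      _ ⊆ A := haA
  have rtk : RightThick κ A → KThick κ A := by
    intro h F hF
    obtain ⟨H, hn, hHκ, hFH⟩ := hnorm F hF
    obtain ⟨a, ha, haA⟩ := h (H : Set G) hHκ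
    refine ⟨a, ha, ?_⟩
    calc F * {a} * F ⊆ (H : Set G) * {a} * (H : Set G) :=
        Set.mul_subset_mul (Set.mul_subset_mul hFH (subset_refl {a})) hFH
      _ = {a} * ((H : Set G) * (H : Set G)) := by
        rw [normal_comm H hn {a}, mul_assoc]
      _ = {a} * (H : Set G) := by rw [coe_mul_coe]
      _ ⊆ A := haA
  have ktl : KThick κ A → LeftThick κ A := by
    intro h F hF
    obtain ⟨H, hn, hHκ, hFH⟩ := hnorm F hF
    obtain ⟨a, ha, haA⟩ := h (H : Set G) hHκ
    refine ⟨a, ha, ?_⟩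
    calc F * {a} = F * {a} * {1} := by rw [Set.singleton_one, mul_one]
      _ ⊆ (H : Set G) * {a} * (H : Set G) :=
        Set.mul_subset_mul (Set.mul_subset_mul hFH (subset_refl {a})) (one_mem H)
      _ ⊆ A := haA
  exact ⟨⟨LR, fun h => KL (RK h)⟩, ⟨RK, fun h => LR (KL h)⟩,
    ⟨ltr, fun h => ktl (rtk h)⟩, ⟨rtk, fun h => ltr (ktl h)⟩⟩
end

section
/- Let G be a group of cardinality κ equipped with a left invariant κ-bounded topology τ. Then every left κ-thick subset of G is τ-dense in G. Consequently, if G can be partitioned into two left κ-thick subsets, then no left invariant κ-bounded topology on G without isolated points is maximal. -/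
open scoped Pointwise
open Cardinal

universe u

variable {G : Type u}

section Aux

variable {G : Type u}

theorem leftThick_nonempty [Group G] {κ : Cardinal.{u}} (hκ : (0:Cardinal) < κ)
    {T : Set G} (hT : LeftThick κ T) : T.Nonempty := by
  obtain ⟨a, ha, -⟩ := hT ∅ (by simpa using hκ)
  exact ⟨a, ha⟩

theorem leftThick_dense [Group G] {κ : Cardinal.{u}} (τ : TopologicalSpace G)
    (hb : KBounded κ τ) {T : Set G} (hT : LeftThick κ T) : @Dense G τ T := by
  letI := τ
  rw [dense_iff_inter_open]
  intro U hU hUne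
  obtain ⟨F, hF, hFU⟩ := hb U hU hUne
  obtain ⟨a, haT, ha⟩ := hT ((·⁻¹) '' F) (lt_of_le_of_lt Cardinal.mk_image_le hF)
  have haFU : a ∈ F * U := by rw [hFU]; trivial
  obtain ⟨f, hf, u, hu, rfl⟩ := haFU
  refine ⟨u, hu, ?_⟩
  have : f⁻¹ * (f * u) ∈ ((·⁻¹) '' F) * ({f * u} : Set G) :=
    Set.mul_mem_mul ⟨f, hf, rfl⟩ rfl
  simpa using ha this

theorem generate_struct {α : Type*} {τ : TopologicalSpace α} {A : Set α} {V : Set α}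
    (h : TopologicalSpace.GenerateOpen ({U | τ.IsOpen U} ∪ {A}) V) :
    ∀ x ∈ V, ∃ U, τ.IsOpen U ∧ x ∈ U ∧ (U ⊆ V ∨ U ∩ A ⊆ V) := by
  induction h with
  | basic W hW =>
    intro x hx
    rcases hW with hW | hW
    · exact ⟨W, hW, hx, Or.inl subset_rfl⟩
    · refine ⟨Set.univ, τ.isOpen_univ, trivial, Or.inr ?_⟩
      rw [Set.mem_singleton_iff] at hW
      rw [hW, Set.univ_inter]
  | univ => intro x _; exact ⟨Set.univ, τ.isOpen_univ, trivial, Or.inl subset_rfl⟩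
  | inter V₁ V₂ h₁ h₂ ih₁ ih₂ =>
    intro x hx
    obtain ⟨U₁, o₁, m₁, d₁⟩ := ih₁ x hx.1
    obtain ⟨U₂, o₂, m₂, d₂⟩ := ih₂ x hx.2
    refine ⟨U₁ ∩ U₂, τ.isOpen_inter _ _ o₁ o₂, ⟨m₁, m₂⟩, ?_⟩
    rcases d₁ with d₁ | d₁ <;> rcases d₂ with d₂ | d₂
    · exact Or.inl fun y hy => ⟨d₁ hy.1, d₂ hy.2⟩
    · exact Or.inr fun y hy => ⟨d₁ hy.1.1, d₂ ⟨hy.1.2, hy.2⟩⟩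
    · exact Or.inr fun y hy => ⟨d₁ ⟨hy.1.1, hy.2⟩, d₂ hy.1.2⟩
    · exact Or.inr fun y hy => ⟨d₁ ⟨hy.1.1, hy.2⟩, d₂ ⟨hy.1.2, hy.2⟩⟩
  | sUnion s hs ih =>
    intro x hx
    obtain ⟨V, hVs, hxV⟩ := hx
    obtain ⟨U, o, m, d⟩ := ih V hVs x hxV
    exact ⟨U, o, m, d.imp (fun h' => h'.trans (Set.subset_sUnion_of_mem hVs))
      (fun h' => h'.trans (Set.subset_sUnion_of_mem hVs))⟩

end Aux

/-- In a left invariant `κ`-bounded topology on a group `G` of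
cardinality `κ`, every left `κ`-thick set is dense; consequently, if `G` partitions
into two left `κ`-thick sets, then no left invariant `κ`-bounded topology on `G`
without isolated points is maximal. -/
theorem leftThick_dense_and_no_maximal {G : Type u} [Group G]
    (κ : Cardinal.{u}) (hκ : #G = κ) :
    (∀ τ : TopologicalSpace G, LeftInvariant τ → KBounded κ τ →
      ∀ T : Set G, LeftThick κ T → @Dense G τ T) ∧
    ((∃ T₁ T₂ : Set G, Disjoint T₁ T₂ ∧ T₁ ∪ T₂ = Set.univ ∧
        LeftThick κ T₁ ∧ LeftThick κ T₂) →
      ∀ τ : TopologicalSpace G, LeftInvariant τ → KBounded κ τ →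
        NoIsolatedPoints τ → ¬ MaximalTopology τ) := by
  
  constructor
  · intro τ _ hb T hT
    exact leftThick_dense τ hb hT
  · rintro ⟨T₁, T₂, hdis, hcov, h1, h2⟩ τ hinv hb hni hmax
    have hpos : (0 : Cardinal) < κ := by
      rw [← hκ]; exact zero_lt_iff.mpr (Cardinal.mk_ne_zero G)
    rcases lt_or_ge κ ℵ₀ with hfin | hinf
    · -- finite case: no such partition exists
      have hfinG : Finite G := Cardinal.lt_aleph0_iff_finite.mp (hκ ▸ hfin)
      have hFcard : #(({(1 : G)}ᶜ : Set G)) < κ := by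
        have hlt : #(({(1 : G)}ᶜ : Set G)) < ℵ₀ := Cardinal.lt_aleph0_iff_finite.mpr
          (Set.toFinite _)
        obtain ⟨n, hn⟩ := Cardinal.lt_aleph0.mp hlt
        have hsum : (1 : Cardinal) + #(({(1 : G)}ᶜ : Set G)) = #G := by
          rw [← Cardinal.mk_singleton (1 : G)]; exact Cardinal.mk_sum_compl _
        rw [← hκ, ← hsum, hn]
        norm_cast
        omega
      obtain ⟨a, ha, haF⟩ := h2 ({(1 : G)}ᶜ) hFcard
      have hT2univ : T₂ = Set.univ := by
        ext g
        simp only [Set.mem_univ, iff_true]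
        by_cases hg : g = a
        · exact hg ▸ ha
        · have hne : g * a⁻¹ ∈ ({(1 : G)}ᶜ : Set G) := by
            simp only [Set.mem_compl_iff, Set.mem_singleton_iff]
            exact fun h => hg (mul_inv_eq_one.mp h)
          have := haF (Set.mul_mem_mul hne (rfl : a ∈ ({a} : Set G)))
          simpa using this
      obtain ⟨t, ht⟩ := leftThick_nonempty hpos h1
      exact Set.disjoint_left.mp hdis ht (hT2univ ▸ Set.mem_univ t)
    · -- infinite case
      set S : Set (Set G) := {U | τ.IsOpen U} ∪ {T₁} with hS
      set τ' := TopologicalSpace.generateFrom S with hτ'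
      have hfiner : ∀ U, τ.IsOpen U → τ'.IsOpen U := fun U hU =>
        TopologicalSpace.GenerateOpen.basic U (Or.inl hU)
      have hT1ne : T₁.Nonempty := leftThick_nonempty hpos h1
      have hT1dense := leftThick_dense τ hb h1
      have hT2dense := leftThick_dense τ hb h2
      have hT1notopen : ¬ τ.IsOpen T₁ := by
        intro hop
        letI := τ
        obtain ⟨y, hy1, hy2⟩ := hT2dense.inter_open_nonempty T₁ hop hT1ne
        exact Set.disjoint_left.mp hdis hy1 hy2
      obtain ⟨x, hx⟩ := hmax τ' hfiner
        ⟨T₁, TopologicalSpace.GenerateOpen.basic T₁ (Or.inr rfl), hT1notopen⟩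
      have hx' : TopologicalSpace.GenerateOpen ({U | τ.IsOpen U} ∪ {T₁}) {x} := hx
      obtain ⟨U, hUo, hxU, hd⟩ := generate_struct hx' x rfl
      rcases hd with hd | hd
      · have hUeq : U = {x} := subset_antisymm hd (Set.singleton_subset_iff.mpr hxU)
        exact hni x (hUeq ▸ hUo)
      · -- U ∩ T₁ = {x}
        have hUne : U.Nonempty := ⟨x, hxU⟩
        have hsing : U ∩ T₁ = {x} := by
          letI := τ
          obtain ⟨y, hyU, hyT⟩ := hT1dense.inter_open_nonempty U hUo hUne
          have hy : y = x := hd ⟨hyU, hyT⟩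
          exact subset_antisymm hd (Set.singleton_subset_iff.mpr (hy ▸ ⟨hyU, hyT⟩))
        obtain ⟨F, hF, hFU⟩ := hb U hUo hUne
        have key : ∀ b ∈ T₁, (∀ f ∈ F, f⁻¹ * b ∈ T₁) → ∃ f ∈ F, b = f * x := by
          intro b hb1 hbf
          have hbFU : b ∈ F * U := by rw [hFU]; trivial
          obtain ⟨f, hf, u, hu, rfl⟩ := hbFU
          have hu1 : u ∈ T₁ := by simpa using hbf f hf
          have huX : u ∈ ({x} : Set G) := hsing ▸ (⟨hu, hu1⟩ : u ∈ U ∩ T₁)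
          exact ⟨f, hf, by rw [huX]⟩
        have allc : ∀ c : G, ∃ f ∈ F, ∃ f' ∈ F, c = f' * f⁻¹ := by
          intro c
          set Fc : Set G := ((·⁻¹) '' F) ∪ ({c} ∪ (fun f => f⁻¹ * c) '' F) with hFc
          have hFcκ : #Fc < κ := by
            refine lt_of_le_of_lt (Cardinal.mk_union_le _ _) ?_
            refine Cardinal.add_lt_of_lt hinf (lt_of_le_of_lt Cardinal.mk_image_le hF) ?_
            refine lt_of_le_of_lt (Cardinal.mk_union_le _ _) ?_
            refine Cardinal.add_lt_of_lt hinf ?_ (lt_of_le_of_lt Cardinal.mk_image_le hF)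
            rw [Cardinal.mk_singleton]
            exact lt_of_lt_of_le Cardinal.one_lt_aleph0 hinf
          obtain ⟨a, ha1, haF⟩ := h1 Fc hFcκ
          have hmem : ∀ g ∈ Fc, g * a ∈ T₁ := fun g hg =>
            haF (Set.mul_mem_mul hg (rfl : a ∈ ({a} : Set G)))
          have h_a : ∃ f ∈ F, a = f * x :=
            key a ha1 (fun f hf => hmem _ (Or.inl ⟨f, hf, rfl⟩))
          have h_ca : ∃ f ∈ F, c * a = f * x := by
            refine key (c * a) (hmem c (Or.inr (Or.inl rfl))) ?_
            intro f hf
            have := hmem (f⁻¹ * c) (Or.inr (Or.inr ⟨f, hf, rfl⟩))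
            simpa [mul_assoc] using this
          obtain ⟨f, hf, hfa⟩ := h_a
          obtain ⟨f', hf', hfa'⟩ := h_ca
          refine ⟨f, hf, f', hf', ?_⟩
          have h3 : c * f = f' := by
            have h4 : (c * f) * x = f' * x := by rw [mul_assoc, ← hfa]; exact hfa'
            exact mul_right_cancel h4
          rw [← h3]
          group
        have hsurj : Function.Surjective (fun p : F × F => (p.2 : G) * (p.1 : G)⁻¹) := by
          intro c
          obtain ⟨f, hf, f', hf', hc⟩ := allc c
          exact ⟨(⟨f, hf⟩, ⟨f', hf'⟩), hc.symm⟩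
        have hle : #G ≤ #F * #F := by
          have h5 := Cardinal.mk_le_of_surjective hsurj
          simpa [Cardinal.mk_prod, Cardinal.lift_id, mul_comm] using h5
        exact (Cardinal.mul_lt_of_lt hinf hF hF).not_ge (hκ ▸ hle)
end

section
/- Let G be a group, κ a cardinal, and A, B ⊆ G. If neither A nor B is left κ-large, then the set A ∩ B⁻¹ is neither left κ-large nor right κ-large. Consequently, if every cell of a partition P of G is not left κ-large, then every cell of the partition P ∧ P⁻¹ = {A ∩ B⁻¹ : A, B ∈ P} is neither left nor right κ-large. -/
open scoped Pointwise
open Cardinal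

universe u

variable {G : Type u}

lemma leftLarge_mono [Group G] {κ : Cardinal.{u}} {S T : Set G} (h : S ⊆ T)
    (hS : LeftLarge κ S) : LeftLarge κ T := by
  obtain ⟨F, hF, hFS⟩ := hS
  exact ⟨F, hF, Set.eq_univ_of_univ_subset (hFS ▸ Set.mul_subset_mul_left h)⟩

lemma mk_inv_set [Group G] (F : Set G) : #(F⁻¹ : Set G) = #F := by
  rw [← Set.image_inv_eq_inv]
  exact Cardinal.mk_image_eq inv_injective

lemma rightLarge_iff_leftLarge_inv [Group G] {κ : Cardinal.{u}} {S : Set G} :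
    RightLarge κ S ↔ LeftLarge κ S⁻¹ := by
  constructor
  · rintro ⟨F, hF, hFS⟩
    refine ⟨F⁻¹, by rwa [mk_inv_set], ?_⟩
    rw [← mul_inv_rev, hFS, Set.inv_univ]
  · rintro ⟨F, hF, hFS⟩
    refine ⟨F⁻¹, by rwa [mk_inv_set], ?_⟩
    have := congrArg (·⁻¹) hFS
    simpa [mul_inv_rev] using this

/-- If neither `A` nor `B` is left `κ`-large then `A ∩ B⁻¹` is
neither left nor right `κ`-large; consequently, if no cell of a partition `P` of `G`
is left `κ`-large, then no cell of `P ∧ P⁻¹ = {A ∩ B⁻¹ : A, B ∈ P}` is left or right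
`κ`-large. -/
theorem inter_inv_not_large {G : Type u} [Group G] (κ : Cardinal.{u}) :
    (∀ A B : Set G, ¬ LeftLarge κ A → ¬ LeftLarge κ B →
      ¬ LeftLarge κ (A ∩ B⁻¹) ∧ ¬ RightLarge κ (A ∩ B⁻¹)) ∧
    (∀ P : Set (Set G), P.Pairwise Disjoint → ⋃₀ P = Set.univ →
      (∀ A ∈ P, ¬ LeftLarge κ A) →
      ∀ A ∈ P, ∀ B ∈ P,
        ¬ LeftLarge κ (A ∩ B⁻¹) ∧ ¬ RightLarge κ (A ∩ B⁻¹)) := by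
  have main : ∀ A B : Set G, ¬ LeftLarge κ A → ¬ LeftLarge κ B →
      ¬ LeftLarge κ (A ∩ B⁻¹) ∧ ¬ RightLarge κ (A ∩ B⁻¹) := by
    intro A B hA hB
    constructor
    · intro h
      exact hA (leftLarge_mono Set.inter_subset_left h)
    · intro h
      rw [rightLarge_iff_leftLarge_inv] at h
      apply hB
      apply leftLarge_mono (T := B) _ h
      rw [Set.inter_inv, inv_inv]
      exact Set.inter_subset_right
  exact ⟨main, fun P _ _ hP A hA B hB => main A B (hP A hA) (hP B hB)⟩
end

section
/- Let F_A be a free group on a nonempty set A and let κ = |F_A|. Then F_A can be partitioned into three subsets B₁, B₂, B₃ (pairwise disjoint with union F_A) such that each Bᵢ is neither left κ-large nor right κ-large. -/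
open scoped Pointwise
open Cardinal

universe u

variable {G : Type u}

/-!
Colour `F_A` with three colours by a colouring `c` invariant under inversion, such that for every
colour `i` and every `F` with `|F| < κ` some translate `F * x` avoids the colour `i`, i.e. the
complement of each colour class is left `κ`-thick. If `F * B = F_A` for a colour class `B`, some
`F⁻¹ * x` avoids `B`, although `x ∈ F * B` forces it to meet `B`; so no class is left `κ`-large, and
by inversion none is right `κ`-large.

* `A` finite, `κ = ℵ₀`: colour `g` by `⌊√|g|⌋ mod 3`. For `|f| ≤ k` the length of `f * a ^ (k² + k)`
  lies in `[k², (k + 1)²)`, and `k` can be taken large with `k mod 3 ≠ i`.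
* `A` infinite, `κ = |A|`: split `A` into three colour classes each meeting the complement of every
  set of size `< |A|`, and colour `g` by a colour different from those of the first and last letters
  of its reduced word (using both ends keeps the colouring invariant under inversion). A letter
  `a` of colour `i` that occurs in no word of `F` is the last letter of every `f * a`, `f ∈ F`.
-/

open Cardinal FreeGroup

section Thick

variable [Group G] {κ : Cardinal.{u}} {S : Set G}

theorem LeftThick.not_leftLarge_compl_s18 (h : LeftThick κ S) : ¬ LeftLarge κ Sᶜ := by
  rintro ⟨F, hF, hFS⟩
  obtain ⟨a, -, haS⟩ := h F⁻¹ (by rwa [mk_inv])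
  obtain ⟨f, hf, b, hb, rfl⟩ : a ∈ F * Sᶜ := hFS ▸ Set.mem_univ a
  exact hb (by simpa using haS (Set.mul_mem_mul (Set.inv_mem_inv.2 hf) rfl))

theorem RightThick.not_rightLarge_compl (h : RightThick κ S) : ¬ RightLarge κ Sᶜ := by
  rintro ⟨F, hF, hSF⟩
  obtain ⟨a, -, haS⟩ := h F⁻¹ (by rwa [mk_inv])
  obtain ⟨b, hb, f, hf, rfl⟩ : a ∈ Sᶜ * F := hSF ▸ Set.mem_univ a
  exact hb (by simpa using haS (Set.mul_mem_mul rfl (Set.inv_mem_inv.2 hf)))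

theorem LeftThick.inv (h : LeftThick κ S) : RightThick κ S⁻¹ := by
  intro F hF
  obtain ⟨a, ha, haF⟩ := h F⁻¹ (by rwa [mk_inv])
  refine ⟨a⁻¹, by simpa, ?_⟩
  rintro _ ⟨_, rfl, f, hf, rfl⟩
  simpa using haF (Set.mul_mem_mul (Set.inv_mem_inv.2 hf) rfl)

theorem exists_partition_three_not_large_of_leftThick (c : G → Fin 3)
    (hc : ∀ g, c g⁻¹ = c g) (hthick : ∀ i, LeftThick κ (c ⁻¹' {i})ᶜ) :
    ∃ B₁ B₂ B₃ : Set G,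
      Disjoint B₁ B₂ ∧ Disjoint B₁ B₃ ∧ Disjoint B₂ B₃ ∧
      B₁ ∪ B₂ ∪ B₃ = Set.univ ∧
      (¬ LeftLarge κ B₁ ∧ ¬ RightLarge κ B₁) ∧
      (¬ LeftLarge κ B₂ ∧ ¬ RightLarge κ B₂) ∧
      (¬ LeftLarge κ B₃ ∧ ¬ RightLarge κ B₃) := by
  have hfiber (i : Fin 3) : ¬ LeftLarge κ (c ⁻¹' {i}) ∧ ¬ RightLarge κ (c ⁻¹' {i}) := by
    have hinv : ((c ⁻¹' {i})ᶜ)⁻¹ = (c ⁻¹' {i})ᶜ := by ext g; simp [hc]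
    refine ⟨by simpa using (hthick i).not_leftLarge_compl_s18, ?_⟩
    simpa [hinv] using (hthick i).inv.not_rightLarge_compl
  refine ⟨c ⁻¹' {0}, c ⁻¹' {1}, c ⁻¹' {2}, .preimage c (by simp), .preimage c (by simp),
    .preimage c (by simp), Set.eq_univ_of_forall fun g => ?_, hfiber 0, hfiber 1, hfiber 2⟩
  have := (c g).isLt
  simp only [Set.mem_union, Set.mem_preimage, Set.mem_singleton_iff, Fin.ext_iff]
  omega

end Thick

theorem Cardinal.mk_biUnion_lt_of_finite {ι α : Type u} {κ : Cardinal.{u}} (hκ : ℵ₀ ≤ κ)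
    {s : Set ι} (hs : #s < κ) {t : ι → Set α} (ht : ∀ i ∈ s, (t i).Finite) :
    #(⋃ i ∈ s, t i) < κ := by
  rcases lt_or_ge #s ℵ₀ with hfin | hinf
  · exact ((lt_aleph0_iff_set_finite.1 hfin).biUnion ht).lt_aleph0.trans_le hκ
  · calc #(⋃ i ∈ s, t i) ≤ #s * ⨆ i : s, #(t i) := mk_biUnion_le t s
      _ ≤ #s * ℵ₀ := by
        gcongr
        exact ciSup_le' fun i => (ht i i.2).lt_aleph0.le
      _ = #s := mul_aleph0_eq hinf
      _ < κ := hs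

theorem exists_coloring_forall_exists_notMem (A : Type u) [Infinite A] (ι : Type) [Finite ι]
    [Nonempty ι] : ∃ cl : A → ι, ∀ i, ∀ S : Set A, #S < #A → ∃ a ∉ S, cl a = i := by
  have hcard : #(ULift.{u} ι × A) = #A := by
    simp only [mk_prod, mk_uLift, lift_id]
    exact Cardinal.mul_eq_right (aleph0_le_mk A)
      ((lift_lt_aleph0.2 (lt_aleph0_of_finite ι)).le.trans (aleph0_le_mk A)) (by simp)
  obtain ⟨e⟩ := Cardinal.eq.1 hcard.symm
  refine ⟨fun a => (e a).1.down, fun i S hS => ?_⟩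
  obtain ⟨b, hb⟩ : ∃ b, b ∉ Prod.snd '' (e '' S) :=
    (Set.ne_univ_iff_exists_notMem _).1 fun h => (mk_image_le.trans mk_image_le).not_gt
      (by rwa [h, mk_univ])
  refine ⟨e.symm (⟨i⟩, b), fun ha => hb ⟨_, ⟨_, ha, rfl⟩, by simp⟩, by simp⟩

section LengthColoring

variable {A : Type u} [DecidableEq A]

theorem sqrt_norm_mul_of_pow (a : A) {g : FreeGroup A} {k : ℕ} (hg : g.norm ≤ k) :
    Nat.sqrt (g * of a ^ (k * k + k)).norm = k := by
  have hle := norm_mul_le g (of a ^ (k * k + k))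
  have hge := norm_mul_le g⁻¹ (g * of a ^ (k * k + k))
  rw [inv_mul_cancel_left, norm_inv_eq, norm_of_pow] at hge
  rw [norm_of_pow] at hle
  exact (Nat.eq_sqrt.2 ⟨by omega, by nlinarith⟩).symm

def sqrtNormColor (g : FreeGroup A) : Fin 3 := Fin.ofNat 3 (Nat.sqrt g.norm)

theorem leftThick_sqrtNormColor [Nonempty A] (i : Fin 3) :
    LeftThick ℵ₀ (sqrtNormColor ⁻¹' {i} : Set (FreeGroup A))ᶜ := by
  intro F hF
  obtain ⟨m, hm⟩ := ((lt_aleph0_iff_set_finite.1 hF).image FreeGroup.norm).bddAbove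
  obtain ⟨a⟩ := ‹Nonempty A›
  set k := 3 * m + i + 1
  have hk : Fin.ofNat 3 k ≠ i := by
    simp only [ne_eq, Fin.ext_iff, Fin.val_ofNat, k]
    omega
  have hcolor (g : FreeGroup A) (hg : g.norm ≤ m) :
      g * of a ^ (k * k + k) ∈ (sqrtNormColor ⁻¹' {i})ᶜ := by
    simpa [sqrtNormColor, sqrt_norm_mul_of_pow a (hg.trans (by omega : m ≤ k))] using hk
  refine ⟨of a ^ (k * k + k), by simpa using hcolor 1 (by simp), ?_⟩
  rintro _ ⟨f, hf, _, rfl, rfl⟩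
  exact hcolor f (hm ⟨f, hf, rfl⟩)

end LengthColoring

section LetterColoring

def avoidTwo (x y : Fin 3) : Fin 3 :=
  if 0 ≠ x ∧ 0 ≠ y then 0 else if 1 ≠ x ∧ 1 ≠ y then 1 else 2

theorem avoidTwo_ne_left (x y : Fin 3) : avoidTwo x y ≠ x := by revert x y; decide

theorem avoidTwo_comm (x y : Fin 3) : avoidTwo x y = avoidTwo y x := by revert x y; decide

variable {A : Type u} [DecidableEq A]

theorem FreeGroup.toWord_mul_of_of_notMem {g : FreeGroup A} {a : A}
    (ha : a ∉ g.toWord.map Prod.fst) : (g * of a).toWord = g.toWord ++ [(a, true)] := by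
  rw [toWord_mul, toWord_of]
  refine IsReduced.reduce_eq (List.isChain_append.2 ⟨isReduced_toWord, IsReduced.singleton, ?_⟩)
  intro x hx y hy hxy
  obtain rfl : y = (a, true) := by simpa [eq_comm] using hy
  have hxg := List.mem_map_of_mem (f := Prod.fst) (List.mem_of_mem_getLast? hx)
  exact (ha (by simpa [hxy] using hxg)).elim

def letterColor (cl : A → Fin 3) (g : FreeGroup A) : Fin 3 :=
  avoidTwo (((g.toWord.map Prod.fst).getLast?.map cl).getD 0)
    (((g.toWord.map Prod.fst).head?.map cl).getD 0)

theorem letterColor_inv (cl : A → Fin 3) (g : FreeGroup A) :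
    letterColor cl g⁻¹ = letterColor cl g := by
  simp [letterColor, toWord_inv, invRev, List.map_reverse, Function.comp_def, avoidTwo_comm]

theorem letterColor_mul_of_ne (cl : A → Fin 3) {g : FreeGroup A} {a : A}
    (ha : a ∉ g.toWord.map Prod.fst) : letterColor cl (g * of a) ≠ cl a := by
  simpa [letterColor, toWord_mul_of_of_notMem ha] using avoidTwo_ne_left _ _

theorem leftThick_letterColor [Infinite A] {cl : A → Fin 3}
    (hcl : ∀ i, ∀ S : Set A, #S < #A → ∃ a ∉ S, cl a = i) (i : Fin 3) :
    LeftThick #A (letterColor cl ⁻¹' {i})ᶜ := by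
  intro F hF
  obtain ⟨a, haF, rfl⟩ := hcl i (⋃ f ∈ F, {b | b ∈ f.toWord.map Prod.fst})
    (mk_biUnion_lt_of_finite (aleph0_le_mk A) hF fun f _ => List.finite_toSet _)
  refine ⟨of a, by simpa using letterColor_mul_of_ne cl (g := 1) (a := a) (by simp), ?_⟩
  rintro _ ⟨f, hf, _, rfl, rfl⟩
  exact letterColor_mul_of_ne cl fun ha => haF (Set.mem_biUnion hf ha)

end LetterColoring

/-- Every free group `F_A` on a nonempty set `A` can be partitioned
into three subsets, each of which is neither left nor right `κ`-large, `κ = |F_A|`. -/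
theorem freeGroup_partition_three_not_large (A : Type u) [Nonempty A] :
    ∃ B₁ B₂ B₃ : Set (FreeGroup A),
      Disjoint B₁ B₂ ∧ Disjoint B₁ B₃ ∧ Disjoint B₂ B₃ ∧
      B₁ ∪ B₂ ∪ B₃ = Set.univ ∧
      (¬ LeftLarge (#(FreeGroup A)) B₁ ∧ ¬ RightLarge (#(FreeGroup A)) B₁) ∧
      (¬ LeftLarge (#(FreeGroup A)) B₂ ∧ ¬ RightLarge (#(FreeGroup A)) B₂) ∧
      (¬ LeftLarge (#(FreeGroup A)) B₃ ∧ ¬ RightLarge (#(FreeGroup A)) B₃) := by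
  classical
  rcases finite_or_infinite A with hA | hA
  · rw [mk_freeGroup, max_eq_right (lt_aleph0_of_finite A).le]
    exact exists_partition_three_not_large_of_leftThick sqrtNormColor
      (fun g => by simp only [sqrtNormColor, norm_inv_eq]) leftThick_sqrtNormColor
  · rw [mk_freeGroup, max_eq_left (aleph0_le_mk A)]
    obtain ⟨cl, hcl⟩ := exists_coloring_forall_exists_notMem A (Fin 3)
    exact exists_partition_three_not_large_of_leftThick (letterColor cl) (letterColor_inv cl)
      (leftThick_letterColor hcl)
end
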